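/- arXiv:1208.2294 — 10 statements merged into one kernel-verified Lean document; each statement's English description precedes it below -/
import Mathlib

section
/- Every submodular function f: {0,1}^n → {0,1,...,k} can be represented by a pseudo-Boolean 2k-DNF with constants a_t ∈ {0,1,...,k}; moreover, each term of this DNF contains at most k positive variables and at most k negated variables (|A_t| ≤ k and |B_t| ≤ k for every term t). -/
lemma submod_key (n k : ℕ) (f : Finset (Fin n) → ℕ)
    (hrange : ∀ S, f S ≤ k)
    (hsub : ∀ S T : Finset (Fin n), f (S ∪ T) + f (S ∩ T) ≤ f S + f T)
    (S : Finset (Fin n)) :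
    ∃ A : Finset (Fin n), A ⊆ S ∧ A.card ≤ k ∧
      ∀ X, A ⊆ X → X ⊆ S → f S ≤ f X := by
  classical
  set 𝒜 : Finset (Finset (Fin n)) :=
    (S.powerset).filter (fun A => ∀ X, A ⊆ X → X ⊆ S → f S ≤ f X) with h𝒜
  have hS𝒜 : S ∈ 𝒜 := by
    simp only [h𝒜, Finset.mem_filter, Finset.mem_powerset]
    exact ⟨le_refl _, fun X h1 h2 => by rw [Finset.Subset.antisymm h2 h1]⟩
  obtain ⟨A, hA𝒜, hAmin⟩ := 𝒜.exists_min_image Finset.card ⟨S, hS𝒜⟩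
  simp only [h𝒜, Finset.mem_filter, Finset.mem_powerset] at hA𝒜
  obtain ⟨hAS, hAP⟩ := hA𝒜
  -- minimality: removing a point from A breaks the property
  have hmin : ∀ a ∈ A, ∃ X, A.erase a ⊆ X ∧ X ⊆ S ∧ a ∉ X ∧ f X < f S := by
    intro a ha
    by_contra h
    push_neg at h
    have hP : ∀ X, A.erase a ⊆ X → X ⊆ S → f S ≤ f X := by
      intro X h1 h2
      by_cases haX : a ∈ X
      · exact hAP X (fun x hx => by
          by_cases hxa : x = a
          · exact hxa ▸ haX
          · exact h1 (Finset.mem_erase.2 ⟨hxa, hx⟩)) h2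
      · by_contra hlt
        exact absurd (h X h1 h2 haX) (by omega)
    have hmem : A.erase a ∈ 𝒜 := by
      simp only [h𝒜, Finset.mem_filter, Finset.mem_powerset]
      exact ⟨(Finset.erase_subset a A).trans hAS, hP⟩
    have := hAmin _ hmem
    have := Finset.card_erase_of_mem ha
    have : 0 < A.card := Finset.card_pos.2 ⟨a, ha⟩
    omega
  -- claim: every C ⊆ A satisfies C.card ≤ f C
  have claim : ∀ m (C : Finset (Fin n)), C.card = m → C ⊆ A → C.card ≤ f C := by
    intro m
    induction m with
    | zero => intro C hc _; omega
    | succ m ih =>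
      intro C hc hCA
      obtain ⟨a, ha⟩ : C.Nonempty := Finset.card_pos.1 (by omega)
      obtain ⟨X, hX1, hX2, hX3, hX4⟩ := hmin a (hCA ha)
      have hC'X : C.erase a ⊆ X := fun x hx => hX1 (Finset.mem_erase.2
        ⟨(Finset.mem_erase.1 hx).1, hCA (Finset.mem_erase.1 hx).2⟩)
      have hsub' := hsub C X
      have hU : C ∪ X = insert a X := by
        rw [← Finset.insert_erase ha]
        rw [Finset.insert_union]
        congr 1
        exact Finset.union_eq_right.2 hC'X
      have hI : C ∩ X = C.erase a := by
        apply Finset.Subset.antisymm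
        · intro x hx
          simp only [Finset.mem_inter] at hx
          exact Finset.mem_erase.2 ⟨fun h => hX3 (h ▸ hx.2), hx.1⟩
        · intro x hx
          exact Finset.mem_inter.2 ⟨(Finset.mem_erase.1 hx).2, hC'X hx⟩
      rw [hU, hI] at hsub'
      have hins : f S ≤ f (insert a X) := by
        apply hAP
        · intro x hx
          by_cases hxa : x = a
          · exact hxa ▸ Finset.mem_insert_self a X
          · exact Finset.mem_insert_of_mem (hX1 (Finset.mem_erase.2 ⟨hxa, hx⟩))
        · exact Finset.insert_subset (hAS (hCA ha)) hX2
      have hcard : (C.erase a).card = m := by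
        rw [Finset.card_erase_of_mem ha]; omega
      have := ih (C.erase a) hcard ((Finset.erase_subset a C).trans hCA)
      omega
  exact ⟨A, hAS, le_trans (claim A.card A rfl (le_refl _)) (hrange A), hAP⟩

/-- Every submodular function `f : 2^[n] → {0,…,k}` can be represented
by a pseudo-Boolean 2k-DNF with constants in `{0,…,k}`, where moreover every term
has at most `k` positive and at most `k` negated variables. -/
theorem submodular_repr_two_k_dnf (n k : ℕ) (f : Finset (Fin n) → ℕ)
    (hrange : ∀ S, f S ≤ k)
    (hsub : ∀ S T : Finset (Fin n), f (S ∪ T) + f (S ∩ T) ≤ f S + f T) :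
    ∃ (s : ℕ) (a : Fin s → ℕ) (A B : Fin s → Finset (Fin n)),
      (∀ t, a t ≤ k) ∧
      (∀ t, (A t).card + (B t).card ≤ 2 * k) ∧
      (∀ t, (A t).card ≤ k ∧ (B t).card ≤ k) ∧
      (∀ S : Finset (Fin n),
        f S = Finset.univ.sup fun t =>
          if A t ⊆ S ∧ Disjoint (B t) S then a t else 0) := by
  classical
  -- dual function
  set g : Finset (Fin n) → ℕ := fun X => f Xᶜ with hg
  have hgrange : ∀ S, g S ≤ k := fun S => hrange _
  have hgsub : ∀ S T : Finset (Fin n), g (S ∪ T) + g (S ∩ T) ≤ g S + g T := by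
    intro S T
    have := hsub Sᶜ Tᶜ
    simp only [hg, Finset.compl_union, Finset.compl_inter]
    omega
  -- choose for each S the certificate pair
  have hA := fun S => submod_key n k f hrange hsub S
  have hB := fun S => submod_key n k g hgrange hgsub Sᶜ
  choose AS hAS hAcard hAprop using hA
  choose BS hBS hBcard hBprop using hB
  -- combined property
  have hcomb : ∀ S X : Finset (Fin n), AS S ⊆ X → Disjoint (BS S) X → f S ≤ f X := by
    intro S X h1 h2
    have hi : f S ≤ f (X ∩ S) :=
      (hAprop S) (X ∩ S) (Finset.subset_inter h1 (hAS S)) Finset.inter_subset_right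
    have hu : f S ≤ f (X ∪ S) := by
      have := (hBprop S) (X ∪ S)ᶜ ?_ ?_
      · simpa [hg, compl_compl] using this
      · intro x hx
        rw [Finset.mem_compl, Finset.mem_union]
        push_neg
        exact ⟨Finset.disjoint_left.1 h2 hx, Finset.mem_compl.1 (hBS S hx)⟩
      · exact Finset.compl_subset_compl.2 Finset.subset_union_right
    have := hsub X S
    omega
  -- assemble
  refine ⟨Fintype.card (Finset (Fin n)), fun t => f ((Fintype.equivFin (Finset (Fin n))).symm t),
    fun t => AS ((Fintype.equivFin (Finset (Fin n))).symm t),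
    fun t => BS ((Fintype.equivFin (Finset (Fin n))).symm t),
    fun t => hrange _, fun t => ?_, fun t => ?_, fun S => ?_⟩
  · have h1 := hAcard ((Fintype.equivFin (Finset (Fin n))).symm t)
    have h2 := hBcard ((Fintype.equivFin (Finset (Fin n))).symm t)
    dsimp only
    omega
  · exact ⟨hAcard _, hBcard _⟩
  · apply le_antisymm
    · have hmem : (Fintype.equivFin (Finset (Fin n))) S ∈ (Finset.univ : Finset (Fin _)) :=
        Finset.mem_univ _
      refine le_trans ?_ (Finset.le_sup hmem)
      simp only [Equiv.symm_apply_apply]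
      rw [if_pos]
      exact ⟨hAS S, Finset.disjoint_left.2 fun x hx hxS =>
        (Finset.mem_compl.1 (hBS S hx)) hxS⟩
    · apply Finset.sup_le
      intro t _
      split_ifs with h
      · exact hcomb _ S h.1 h.2
      · exact Nat.zero_le _
end

section
/- Every monotone submodular function f: {0,1}^n → {0,1,...,k} can be represented by a monotone pseudo-Boolean k-DNF with constants a_t ∈ {0,1,...,k}. -/
/-!
A monotone submodular `f` with values in `ℕ` is determined by its values on sets of size at most
`f`: starting from `∅ ⊆ S`, as long as `f A < f S` some `x ∈ S` strictly increases `f A`, since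
by submodularity, if no single element raises `f A`, then no subset of `S` does. Each step gains
at least `1`, so after at most `f S` steps we reach `B ⊆ S` with `#B ≤ f S` and `f B = f S`.
Hence `f S` is the maximum of `f B` over the sets `B ⊆ S` with `#B ≤ k`, which is the monotone
`k`-DNF with one term `f B · ∧_{i ∈ B} x_i` for each such `B`.
-/

open Finset

variable {α M : Type*} [DecidableEq α]

def IsSubmodular [Add M] [LE M] (f : Finset α → M) : Prop :=
  ∀ S T, f (S ∪ T) + f (S ∩ T) ≤ f S + f T

namespace IsSubmodular

theorem union_le_of_forall_insert_le [AddCommMonoid M] [PartialOrder M]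
    [IsOrderedCancelAddMonoid M] {f : Finset α → M} (hf : IsSubmodular f) {A T : Finset α}
    (h : ∀ x ∈ T, f (insert x A) ≤ f A) : f (A ∪ T) ≤ f A := by
  induction T using Finset.induction_on with
  | empty => simp
  | insert x T hxT ih =>
    have hunion : A ∪ T ∪ insert x A = A ∪ insert x T := by
      ext y; simp only [mem_union, mem_insert]; tauto
    have hinter : (A ∪ T) ∩ insert x A = A := by
      ext y; simp only [mem_inter, mem_union, mem_insert]
      constructor
      · rintro ⟨hA | hT, rfl | hA'⟩ <;> first | assumption | exact absurd hT hxT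
      · exact fun hy => ⟨.inl hy, .inr hy⟩
    have key := hf (A ∪ T) (insert x A)
    rw [hunion, hinter] at key
    have hT := ih fun y hy => h y (mem_insert_of_mem hy)
    have hx := h x (mem_insert_self x T)
    exact le_of_add_le_add_right (key.trans (add_le_add hT hx))

theorem exists_lt_insert [AddCommMonoid M] [LinearOrder M] [IsOrderedCancelAddMonoid M]
    {f : Finset α → M} (hf : IsSubmodular f) {A S : Finset α} (hAS : A ⊆ S) (hlt : f A < f S) :
    ∃ x ∈ S, f A < f (insert x A) := by
  by_contra! h
  have := hf.union_le_of_forall_insert_le h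
  rw [union_eq_right.2 hAS] at this
  exact this.not_gt hlt

theorem exists_between_card_le {f : Finset α → ℕ} (hf : IsSubmodular f) {S : Finset α} (j : ℕ) :
    ∀ A ⊆ S, f S ≤ f A + j → ∃ B, A ⊆ B ∧ B ⊆ S ∧ #B ≤ #A + j ∧ f S ≤ f B := by
  induction j with
  | zero => exact fun A hAS hle => ⟨A, subset_rfl, hAS, le_rfl, hle⟩
  | succ j ih =>
    intro A hAS hle
    by_cases hdone : f S ≤ f A
    · exact ⟨A, subset_rfl, hAS, by omega, hdone⟩
    obtain ⟨x, hxS, hgain⟩ := hf.exists_lt_insert hAS (not_le.1 hdone)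
    obtain ⟨B, hAB, hBS, hcard, hfB⟩ := ih (insert x A) (insert_subset hxS hAS) (by omega)
    refine ⟨B, (subset_insert x A).trans hAB, hBS, ?_, hfB⟩
    have := card_insert_le x A
    omega

theorem exists_subset_card_le {f : Finset α → ℕ} (hf : IsSubmodular f) (S : Finset α) :
    ∃ B ⊆ S, #B ≤ f S ∧ f S ≤ f B := by
  obtain ⟨B, -, hBS, hcard, hfB⟩ := hf.exists_between_card_le (f S) ∅ (empty_subset S) le_add_self
  exact ⟨B, hBS, by simpa using hcard, hfB⟩

end IsSubmodular

theorem eq_sup_of_forall_exists_subset {f : Finset α → ℕ} (hf : Monotone f)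
    {𝒞 : Finset (Finset α)} (h𝒞 : ∀ S, ∃ B ∈ 𝒞, B ⊆ S ∧ f S ≤ f B) (S : Finset α) :
    f S = 𝒞.sup fun B => if B ⊆ S then f B else 0 := by
  refine le_antisymm ?_ (Finset.sup_le fun B _ => ?_)
  · obtain ⟨B, hB𝒞, hBS, hfB⟩ := h𝒞 S
    calc f S ≤ f B := hfB
      _ = if B ⊆ S then f B else 0 := (if_pos hBS).symm
      _ ≤ _ := le_sup (f := fun B => if B ⊆ S then f B else 0) hB𝒞
  · split_ifs with hBS
    exacts [hf hBS, Nat.zero_le _]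

theorem Finset.sup_univ_equivFin_symm {β γ : Type*} [SemilatticeSup γ] [OrderBot γ]
    (𝒞 : Finset β) (g : β → γ) :
    (univ : Finset (Fin #𝒞)).sup (fun t => g (𝒞.equivFin.symm t)) = 𝒞.sup g := by
  rw [← sup_attach 𝒞 g, ← univ_eq_attach, ← univ_map_equiv_to_embedding 𝒞.equivFin.symm,
    sup_map]
  rfl

/-- Every monotone submodular function `f : 2^[n] → {0,…,k}` can be
represented by a monotone pseudo-Boolean k-DNF with constants in `{0,…,k}`
(monotone means no negated variables, i.e. `B_t = ∅`). -/
theorem monotone_submodular_repr_k_dnf (n k : ℕ) (f : Finset (Fin n) → ℕ)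
    (hrange : ∀ S, f S ≤ k)
    (hmono : ∀ S T : Finset (Fin n), S ⊆ T → f S ≤ f T)
    (hsub : ∀ S T : Finset (Fin n), f (S ∪ T) + f (S ∩ T) ≤ f S + f T) :
    ∃ (s : ℕ) (a : Fin s → ℕ) (A : Fin s → Finset (Fin n)),
      (∀ t, a t ≤ k) ∧
      (∀ t, (A t).card ≤ k) ∧
      (∀ S : Finset (Fin n),
        f S = Finset.univ.sup fun t => if A t ⊆ S then a t else 0) := by
  set 𝒞 : Finset (Finset (Fin n)) := univ.filter fun B => #B ≤ k
  have h𝒞 : ∀ S, ∃ B ∈ 𝒞, B ⊆ S ∧ f S ≤ f B := fun S => by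
    obtain ⟨B, hBS, hcard, hfB⟩ := IsSubmodular.exists_subset_card_le hsub S
    exact ⟨B, mem_filter.2 ⟨mem_univ B, hcard.trans (hrange S)⟩, hBS, hfB⟩
  refine ⟨#𝒞, fun t => f (𝒞.equivFin.symm t), fun t => 𝒞.equivFin.symm t,
    fun t => hrange _, fun t => (mem_filter.1 (𝒞.equivFin.symm t).2).2, fun S => ?_⟩
  rw [eq_sup_of_forall_exists_subset hmono h𝒞 S,
    ← sup_univ_equivFin_symm 𝒞 fun B => if B ⊆ S then f B else 0]
end

section
/- Let S ⊆ [n] and let f be a real-valued set function whose restriction to the subsets of S is submodular. Then the function g_S: 2^S → ℝ defined by g_S(Y) = min_{Y ⊆ Z ⊆ S} f(Z) is monotone (nondecreasing) and submodular on 2^S. -/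
/-- If `f` is submodular on the subsets of `S`, then
`g(Y) = min_{Y ⊆ Z ⊆ S} f(Z)` is monotone nondecreasing and submodular on `2^S`.
The minimum is encoded by requiring `g Y` to be the least value of `f` over
`{Z | Y ⊆ Z ⊆ S}`. -/
theorem monlb_monotone_and_submodular (n : ℕ) (S : Finset (Fin n))
    (f : Finset (Fin n) → ℝ)
    (hsub : ∀ T U : Finset (Fin n), T ⊆ S → U ⊆ S →
      f (T ∪ U) + f (T ∩ U) ≤ f T + f U)
    (g : Finset (Fin n) → ℝ)
    (hg : ∀ Y : Finset (Fin n), Y ⊆ S →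
      IsLeast {v : ℝ | ∃ Z : Finset (Fin n), Y ⊆ Z ∧ Z ⊆ S ∧ f Z = v} (g Y)) :
    (∀ Y Y' : Finset (Fin n), Y ⊆ Y' → Y' ⊆ S → g Y ≤ g Y') ∧
    (∀ Y Y' : Finset (Fin n), Y ⊆ S → Y' ⊆ S →
      g (Y ∪ Y') + g (Y ∩ Y') ≤ g Y + g Y') := by
  constructor
  · intro Y Y' hYY' hY'S
    obtain ⟨⟨Z, hZ1, hZ2, hZ3⟩, _⟩ := hg Y' hY'S
    exact (hg Y (hYY'.trans hY'S)).2 ⟨Z, hYY'.trans hZ1, hZ2, hZ3⟩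
  · intro Y Y' hY hY'
    obtain ⟨⟨Z, hZ1, hZ2, hZ3⟩, _⟩ := hg Y hY
    obtain ⟨⟨Z', hZ'1, hZ'2, hZ'3⟩, _⟩ := hg Y' hY'
    have h1 : g (Y ∪ Y') ≤ f (Z ∪ Z') :=
      (hg (Y ∪ Y') (Finset.union_subset hY hY')).2
        ⟨Z ∪ Z', Finset.union_subset_union hZ1 hZ'1,
          Finset.union_subset hZ2 hZ'2, rfl⟩
    have h2 : g (Y ∩ Y') ≤ f (Z ∩ Z') :=
      (hg (Y ∩ Y') ((Finset.inter_subset_left).trans hY)).2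
        ⟨Z ∩ Z', Finset.inter_subset_inter hZ1 hZ'1,
          (Finset.inter_subset_left).trans hZ2, rfl⟩
    have := hsub Z Z' hZ2 hZ'2
    rw [hZ3, hZ'3] at this
    linarith
end

section
/- Let f: 2^[n] → ℝ be submodular and S ⊆ [n]. Define g_S(Y) = min_{Y ⊆ Z ⊆ S} f(Z) and B(S) = {j ∈ S : f(S \ {j}) ≤ f(S)}. Then (i) f(Y) ≥ g_S(Y) for all Y ⊆ S, and (ii) f(Y) = g_S(Y) for all Y with S \ B(S) ⊆ Y ⊆ S. -/
/-- For submodular `f` and `S ⊆ [n]`, with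
`g(Y) = min_{Y ⊆ Z ⊆ S} f(Z)` and `B(S) = {j ∈ S : f(S \ {j}) ≤ f(S)}`:
(i) `f(Y) ≥ g(Y)` for all `Y ⊆ S`, and
(ii) `f(Y) = g(Y)` for all `Y` with `S \ B(S) ⊆ Y ⊆ S`. -/
theorem monlb_lb_and_eq_on_monotone_region (n : ℕ) (f : Finset (Fin n) → ℝ)
    (hsub : ∀ S T : Finset (Fin n), f (S ∪ T) + f (S ∩ T) ≤ f S + f T)
    (S : Finset (Fin n)) (g : Finset (Fin n) → ℝ)
    (hg : ∀ Y : Finset (Fin n), Y ⊆ S →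
      IsLeast {v : ℝ | ∃ Z : Finset (Fin n), Y ⊆ Z ∧ Z ⊆ S ∧ f Z = v} (g Y)) :
    (∀ Y : Finset (Fin n), Y ⊆ S → g Y ≤ f Y) ∧
    (∀ Y : Finset (Fin n),
      S \ (S.filter fun j => f (S.erase j) ≤ f S) ⊆ Y → Y ⊆ S → f Y = g Y) := by
  have lb : ∀ Y : Finset (Fin n), Y ⊆ S → g Y ≤ f Y := by
    intro Y hYS
    exact (hg Y hYS).2 ⟨Y, subset_rfl, hYS, rfl⟩
  refine ⟨lb, ?_⟩
  intro Y hBY hYS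
  -- key monotonicity: for Y ⊆ Z ⊆ S, f Y ≤ f Z
  have key : ∀ m : ℕ, ∀ Z : Finset (Fin n), Z.card = m → Y ⊆ Z → Z ⊆ S → f Y ≤ f Z := by
    intro m
    induction m with
    | zero =>
      intro Z hc hYZ _
      have : Z = ∅ := Finset.card_eq_zero.mp hc
      subst this
      have : Y = ∅ := Finset.subset_empty.mp hYZ
      simp [this]
    | succ k ih =>
      intro Z hc hYZ hZS
      by_cases hZY : Z ⊆ Y
      · rw [Finset.Subset.antisymm hYZ hZY]
      · obtain ⟨j, hjZ, hjY⟩ := Finset.not_subset.mp hZY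
        -- j ∈ Z \ Y, so j ∈ B(S)
        have hjS : j ∈ S := hZS hjZ
        have hjB : f (S.erase j) ≤ f S := by
          by_contra h
          have : j ∈ S \ (S.filter fun j => f (S.erase j) ≤ f S) := by
            simp [hjS, h]
          exact hjY (hBY this)
        -- submodularity on Z and S.erase j
        have hun : Z ∪ S.erase j = S := by
          apply Finset.Subset.antisymm
          · intro x hx
            rcases Finset.mem_union.mp hx with h | h
            · exact hZS h
            · exact Finset.mem_of_mem_erase h
          · intro x hx
            by_cases hxj : x = j
            · exact Finset.mem_union_left _ (hxj ▸ hjZ)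
            · exact Finset.mem_union_right _ (Finset.mem_erase.mpr ⟨hxj, hx⟩)
        have hin : Z ∩ S.erase j = Z.erase j := by
          ext x
          simp only [Finset.mem_inter, Finset.mem_erase]
          constructor
          · rintro ⟨hxZ, hxj, _⟩; exact ⟨hxj, hxZ⟩
          · rintro ⟨hxj, hxZ⟩; exact ⟨hxZ, hxj, hZS hxZ⟩
        have hsm := hsub Z (S.erase j)
        rw [hun, hin] at hsm
        have hstep : f (Z.erase j) ≤ f Z := by linarith
        have hcard : (Z.erase j).card = k := by
          rw [Finset.card_erase_of_mem hjZ, hc]; rfl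
        have hYZe : Y ⊆ Z.erase j := fun x hx =>
          Finset.mem_erase.mpr ⟨fun h => hjY (h ▸ hx), hYZ hx⟩
        have hZeS : Z.erase j ⊆ S := (Finset.erase_subset _ _).trans hZS
        exact (ih _ hcard hYZe hZeS).trans hstep
  have hle : f Y ≤ g Y := by
    rcases (hg Y hYS).1 with ⟨Z, hYZ, hZS, hfZ⟩
    rw [← hfZ]
    exact key Z.card Z rfl hYZ hZS
  linarith [lb Y hYS]
end

section
/- Let f: 2^[n] → ℝ be submodular, S ⊆ [n], and B(S) = {j ∈ S : f(S \ {j}) ≤ f(S)}. Then the restriction of f to the monotone region {Z : S \ B(S) ⊆ Z ⊆ S} is monotone nondecreasing: for all Z, Z' with S \ B(S) ⊆ Z ⊆ Z' ⊆ S, f(Z) ≤ f(Z'). -/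
/-- For submodular `f`, `S ⊆ [n]`, and
`B(S) = {j ∈ S : f(S \ {j}) ≤ f(S)}`, the restriction of `f` to the monotone
region `{Z : S \ B(S) ⊆ Z ⊆ S}` is monotone nondecreasing. -/
theorem monotone_on_monotone_region (n : ℕ) (f : Finset (Fin n) → ℝ)
    (hsub : ∀ S T : Finset (Fin n), f (S ∪ T) + f (S ∩ T) ≤ f S + f T)
    (S : Finset (Fin n)) :
    ∀ Z Z' : Finset (Fin n),
      S \ (S.filter fun j => f (S.erase j) ≤ f S) ⊆ Z → Z ⊆ Z' → Z' ⊆ S →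
      f Z ≤ f Z' := by
  intro Z Z' hZ hZZ' hZ'S
  generalize hk : (Z' \ Z).card = k
  induction k generalizing Z' with
  | zero =>
    have : Z' = Z := by
      have h := Finset.card_eq_zero.mp hk
      have h2 : Z' ⊆ Z := by
        intro x hx
        by_contra hxZ
        exact absurd h (Finset.ne_empty_of_mem (Finset.mem_sdiff.mpr ⟨hx, hxZ⟩))
      exact Finset.Subset.antisymm h2 hZZ'
    rw [this]
  | succ k ih =>
    obtain ⟨j, hj⟩ : (Z' \ Z).Nonempty := by
      rw [← Finset.card_pos, hk]; omega
    obtain ⟨hjZ', hjZ⟩ := Finset.mem_sdiff.mp hj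
    have hjS : j ∈ S := hZ'S hjZ'
    have hjB : j ∈ S.filter fun j => f (S.erase j) ≤ f S := by
      by_contra hB
      exact hjZ (hZ (Finset.mem_sdiff.mpr ⟨hjS, hB⟩))
    have step : f (Z'.erase j) ≤ f Z' := by
      have h1 := hsub Z' (S.erase j)
      have hu : Z' ∪ S.erase j = S := by
        apply Finset.Subset.antisymm
        · exact Finset.union_subset hZ'S (Finset.erase_subset _ _)
        · intro x hx
          rcases eq_or_ne x j with rfl | hne
          · exact Finset.mem_union_left _ hjZ'
          · exact Finset.mem_union_right _ (Finset.mem_erase.mpr ⟨hne, hx⟩)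
      have hi : Z' ∩ S.erase j = Z'.erase j := by
        ext x
        simp only [Finset.mem_inter, Finset.mem_erase]
        constructor
        · rintro ⟨h1, h2, _⟩; exact ⟨h2, h1⟩
        · rintro ⟨h1, h2⟩; exact ⟨h2, h1, hZ'S h2⟩
      rw [hu, hi] at h1
      have h2 : f (S.erase j) ≤ f S := (Finset.mem_filter.mp hjB).2
      linarith
    have hsub1 : Z ⊆ Z'.erase j := fun x hx =>
      Finset.mem_erase.mpr ⟨fun h => hjZ (h ▸ hx), hZZ' hx⟩
    have hsub2 : Z'.erase j ⊆ S := (Finset.erase_subset _ _).trans hZ'S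
    have hcard : (Z'.erase j \ Z).card = k := by
      have : Z'.erase j \ Z = (Z' \ Z).erase j := by
        ext x
        simp only [Finset.mem_sdiff, Finset.mem_erase]
        tauto
      rw [this, Finset.card_erase_of_mem hj, hk]; rfl
    have := ih (Z'.erase j) hsub1 hsub2 hcard
    linarith
end

section
/- Let f: 2^[n] → {0,1,...,k} be a set function. Let 𝒮 be the smallest collection of subsets of [n] such that [n] ∈ 𝒮 and such that whenever S ∈ 𝒮, j ∈ S, and f(S \ {j}) > f(S), also S \ {j} ∈ 𝒮. For each S, let B(S) = {j ∈ S : f(S \ {j}) ≤ f(S)} and let the monotone region of S be {Z : S \ B(S) ⊆ Z ⊆ S}. Then the monotone regions of the sets in 𝒮 cover the whole domain: ⋃_{S ∈ 𝒮} {Z : S \ B(S) ⊆ Z ⊆ S} = 2^[n]. -/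
/-- The smallest collection `𝒮` of subsets of `[n]` containing `[n]` and closed
under removal of a single element `j ∈ S` whenever `f(S \ {j}) > f(S)`. -/
inductive GenFamily {n : ℕ} (f : Finset (Fin n) → ℕ) : Finset (Fin n) → Prop
  | base : GenFamily f Finset.univ
  | step (S : Finset (Fin n)) (j : Fin n) (hS : GenFamily f S) (hj : j ∈ S)
      (h : f S < f (S.erase j)) : GenFamily f (S.erase j)

/-- For `f : 2^[n] → {0,…,k}`, the monotone regions
`{Z : S \ B(S) ⊆ Z ⊆ S}` of the sets `S ∈ 𝒮` (where
`B(S) = {j ∈ S : f(S \ {j}) ≤ f(S)}`) cover the whole domain `2^[n]`. -/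
theorem monotone_regions_cover (n k : ℕ) (f : Finset (Fin n) → ℕ)
    (hrange : ∀ S, f S ≤ k) :
    (⋃ S ∈ {S : Finset (Fin n) | GenFamily f S},
      {Z : Finset (Fin n) |
        S \ (S.filter fun j => f (S.erase j) ≤ f S) ⊆ Z ∧ Z ⊆ S}) = Set.univ := by
  ext Z
  simp only [Set.mem_iUnion, Set.mem_univ, iff_true, Set.mem_setOf_eq]
  suffices h : ∀ m (S : Finset (Fin n)), S.card ≤ m → GenFamily f S → Z ⊆ S →
      ∃ T, GenFamily f T ∧
        (T \ (T.filter fun j => f (T.erase j) ≤ f T)) ⊆ Z ∧ Z ⊆ T by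
    obtain ⟨T, hT, h1, h2⟩ :=
      h (Finset.univ.card) Finset.univ le_rfl GenFamily.base (Finset.subset_univ Z)
    exact ⟨T, hT, h1, h2⟩
  intro m
  induction m with
  | zero =>
    intro S hc hS hZ
    have hSe : S = ∅ := Finset.card_eq_zero.mp (Nat.le_zero.mp hc)
    exact ⟨S, hS, by simp [hSe], hZ⟩
  | succ m ih =>
    intro S hc hS hZ
    by_cases hcov : S \ (S.filter fun j => f (S.erase j) ≤ f S) ⊆ Z
    · exact ⟨S, hS, hcov, hZ⟩
    · obtain ⟨j, hjmem, hjZ⟩ := Finset.not_subset.mp hcov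
      rw [Finset.mem_sdiff, Finset.mem_filter] at hjmem
      obtain ⟨hjS, hjf⟩ := hjmem
      have hlt : f S < f (S.erase j) := by
        push_neg at hjf
        exact hjf hjS
      refine ih (S.erase j) ?_ (GenFamily.step S j hS hjS hlt) ?_
      · have := Finset.card_erase_of_mem hjS
        omega
      · intro x hx
        exact Finset.mem_erase.mpr ⟨fun h => hjZ (h ▸ hx), hZ hx⟩
end

section
/- Let f: 2^[n] → ℝ be submodular and let T ⊆ [n] satisfy f(T \ {j}) < f(T) for every j ∈ T. Then the restriction of f to the subsets of T is strictly increasing: for all Z ⊊ Z' ⊆ T, f(Z) < f(Z'). -/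
/-- If `f` is submodular and `T` satisfies `f(T \ {j}) < f(T)` for
every `j ∈ T`, then `f` restricted to the subsets of `T` is strictly increasing. -/
theorem strictly_increasing_below_T (n : ℕ) (f : Finset (Fin n) → ℝ)
    (hsub : ∀ S T : Finset (Fin n), f (S ∪ T) + f (S ∩ T) ≤ f S + f T)
    (T : Finset (Fin n)) (hT : ∀ j ∈ T, f (T.erase j) < f T) :
    ∀ Z Z' : Finset (Fin n), Z ⊂ Z' → Z' ⊆ T → f Z < f Z' := by
  have key : ∀ (Z : Finset (Fin n)) (j : Fin n), j ∈ T → j ∉ Z → Z ⊆ T →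
      f Z < f (insert j Z) := by
    intro Z j hjT hjZ hZT
    have h := hsub (insert j Z) (T.erase j)
    have hU : insert j Z ∪ T.erase j = T := by
      ext x
      simp only [Finset.mem_union, Finset.mem_insert, Finset.mem_erase]
      constructor
      · rintro (( rfl | hx) | ⟨_, hx⟩) <;> [exact hjT; exact hZT hx; exact hx]
      · intro hx
        by_cases hxj : x = j
        · exact Or.inl (Or.inl hxj)
        · exact Or.inr ⟨hxj, hx⟩
    have hI : insert j Z ∩ T.erase j = Z := by
      ext x
      simp only [Finset.mem_inter, Finset.mem_insert, Finset.mem_erase]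
      constructor
      · rintro ⟨rfl | hx, hne, _⟩
        · exact absurd rfl hne
        · exact hx
      · intro hx
        exact ⟨Or.inr hx, fun h => hjZ (h ▸ hx), hZT hx⟩
    rw [hU, hI] at h
    have := hT j hjT
    linarith
  intro Z Z' hss hsub'
  have hcard : Z.card < Z'.card := Finset.card_lt_card hss
  -- induction on Z'.card - Z.card
  obtain ⟨k, hk⟩ : ∃ k, Z'.card - Z.card = k + 1 :=
    ⟨Z'.card - Z.card - 1, by omega⟩
  clear hcard
  induction k generalizing Z with
  | zero =>
    obtain ⟨j, hjZ', hjZ⟩ := Finset.exists_of_ssubset hss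
    have hins : insert j Z = Z' := by
      apply Finset.eq_of_subset_of_card_le
      · exact Finset.insert_subset hjZ' hss.subset
      · rw [Finset.card_insert_of_notMem hjZ]
        have := Finset.card_lt_card hss
        omega
    have := key Z j (hsub' hjZ') hjZ (hss.subset.trans hsub')
    rwa [hins] at this
  | succ m ih =>
    obtain ⟨j, hjZ', hjZ⟩ := Finset.exists_of_ssubset hss
    have h1 : f Z < f (insert j Z) :=
      key Z j (hsub' hjZ') hjZ (hss.subset.trans hsub')
    have hss2 : insert j Z ⊂ Z' := by
      rw [Finset.ssubset_iff_of_subset (Finset.insert_subset hjZ' hss.subset)]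
      have hlt : (insert j Z).card < Z'.card := by
        rw [Finset.card_insert_of_notMem hjZ]
        have := Finset.card_lt_card hss
        omega
      obtain ⟨x, hx1, hx2⟩ := Finset.exists_of_ssubset
        (Finset.ssubset_of_subset_of_ssubset (le_refl _)
          ((Finset.ssubset_iff_subset_ne).2 ⟨Finset.insert_subset hjZ' hss.subset,
            fun h => by rw [h] at hlt; omega⟩))
      exact ⟨x, hx1, hx2⟩
    have h2 : f (insert j Z) < f Z' := by
      apply ih (insert j Z) hss2
      rw [Finset.card_insert_of_notMem hjZ]
      have := Finset.card_lt_card hss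
      omega
    linarith
end

section
/- Let n, ℓ, s, k be positive integers with s ≤ ℓ ≤ n, let p = ℓ/n, and suppose p < 1/7. Then (|R^{ℓ−s}_n| · |stars(k,s)| · 2^s) / |R^ℓ_n| < (7pk)^s, where |R^ℓ_n| = C(n,ℓ)·2^{n−ℓ}. -/
/-!
Peeling off the first block shows `|stars(k,s)| ≤ ∑_{β ≠ 0} |stars(k, s - |β|)|`, so by strong
induction `|stars(k,s)| ≤ c^s` whenever `∑_{β ≠ 0} c^{-|β|} = (1 + 1/c)^k - 1 ≤ 1`; the choice
`c = 3k/2` works because `(1 + 2/(3k))^k ≤ e^{2/3} < 2`. Moreover `C(n,ℓ-s)/C(n,ℓ) ≤ (ℓ/(n-ℓ))^s`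
and the powers of two contribute `4^s`, so the ratio is at most `(6kℓ/(n-ℓ))^s`, which is below
`(7pk)^s` because `7ℓ < n`.
-/

/-- `stars(k,s)`: the set of finite sequences `β = (β₁,…,β_t)` with each
`β_j ∈ {★,−}^k \ {−}^k` (modeled as `Fin k → Bool` with at least one `true`)
and the total number of `★`'s over all `β_j` equal to `s`. -/
def starsSet (k s : ℕ) : Set (List (Fin k → Bool)) :=
  {l | (∀ b ∈ l, ∃ i, b i = true) ∧
    (l.map fun b => (Finset.univ.filter fun i => b i = true).card).sum = s}

open Finset

def starCount {ι : Type*} [Fintype ι] (b : ι → Bool) : ℕ := #{i | b i = true}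

section
variable {ι : Type*} [Fintype ι]

lemma starCount_pos_iff {b : ι → Bool} : 0 < starCount b ↔ ∃ i, b i = true := by
  simp [starCount, Finset.card_pos, Finset.Nonempty]

lemma starCount_eq_zero_iff {b : ι → Bool} :
    starCount b = 0 ↔ b = fun _ => false := by
  simpa [funext_iff] using (starCount_pos_iff (b := b)).not

lemma sum_pow_starCount [DecidableEq ι] {R : Type*} [CommSemiring R] (x : R) :
    ∑ b : ι → Bool, x ^ starCount b = (1 + x) ^ Fintype.card ι := by
  have h (b : ι → Bool) : x ^ starCount b = ∏ i, if b i then x else 1 := by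
    rw [Finset.prod_ite, prod_const, prod_const_one, mul_one, starCount]
  simp_rw [h]
  rw [← Fintype.prod_sum fun _ (v : Bool) => if v then x else 1]
  simp [add_comm]

lemma sum_pow_starCount_of_pos [DecidableEq ι] {R : Type*} [CommRing R] (x : R) :
    ∑ b : ι → Bool with 0 < starCount b, x ^ starCount b = (1 + x) ^ Fintype.card ι - 1 := by
  have : ({b | 0 < starCount b} : Finset (ι → Bool)) = univ.erase fun _ => false := by
    ext b; simp [Nat.pos_iff_ne_zero, starCount_eq_zero_iff]
  rw [this, sum_erase_eq_sub (mem_univ _), sum_pow_starCount]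
  simp [starCount]

end

section
variable {k : ℕ}

lemma mem_starsSet_iff {s : ℕ} {l : List (Fin k → Bool)} :
    l ∈ starsSet k s ↔ (∀ b ∈ l, ∃ i, b i = true) ∧ (l.map starCount).sum = s :=
  Iff.rfl

@[simp]
lemma nil_mem_starsSet_iff {s : ℕ} : [] ∈ starsSet k s ↔ s = 0 := by
  simp only [mem_starsSet_iff, List.not_mem_nil, IsEmpty.forall_iff, implies_true,
    List.map_nil, List.sum_nil, true_and, eq_comm]

@[simp]
lemma cons_mem_starsSet_iff {s : ℕ} {b : Fin k → Bool} {l : List (Fin k → Bool)} :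
    b :: l ∈ starsSet k s ↔
      0 < starCount b ∧ starCount b ≤ s ∧ l ∈ starsSet k (s - starCount b) := by
  simp only [mem_starsSet_iff, List.forall_mem_cons, List.map_cons, List.sum_cons,
    ← starCount_pos_iff]
  constructor
  · rintro ⟨⟨hb, hl⟩, hsum⟩
    exact ⟨hb, by omega, hl, by omega⟩
  · rintro ⟨hb, hbs, hl, hsum⟩
    exact ⟨⟨hb, hl⟩, by omega⟩

lemma starsSet_zero : starsSet k 0 = {[]} := by
  ext (_ | ⟨b, l⟩) <;> simp
  omega

lemma starsSet_eq_biUnion {s : ℕ} (hs : 0 < s) :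
    starsSet k s =
      ⋃ b ∈ ({b | 0 < starCount b ∧ starCount b ≤ s} : Finset (Fin k → Bool)),
        List.cons b '' starsSet k (s - starCount b) := by
  ext (_ | ⟨b, l⟩)
  · simp [hs.ne']
  · simp only [cons_mem_starsSet_iff, Set.mem_iUnion, Set.mem_image, List.cons.injEq,
      mem_filter, mem_univ, true_and]
    constructor
    · rintro ⟨hb, hbs, hl⟩
      exact ⟨b, ⟨hb, hbs⟩, l, hl, rfl, rfl⟩
    · rintro ⟨_, ⟨hb, hbs⟩, _, hl, rfl, rfl⟩
      exact ⟨hb, hbs, hl⟩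

lemma ncard_starsSet_le_sum {s : ℕ} (hs : 0 < s) :
    (starsSet k s).ncard ≤ ∑ b : Fin k → Bool with 0 < starCount b ∧ starCount b ≤ s,
      (starsSet k (s - starCount b)).ncard := by
  rw [starsSet_eq_biUnion hs]
  refine (Finset.set_ncard_biUnion_le _ _).trans_eq (sum_congr rfl fun b _ => ?_)
  exact Set.ncard_image_of_injective _ List.cons_injective

end

lemma ncard_starsSet_le_pow {k : ℕ} {c : ℝ} (hc : 0 < c) (hck : (1 + c⁻¹) ^ k ≤ 2) (s : ℕ) :
    ((starsSet k s).ncard : ℝ) ≤ c ^ s := by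
  induction s using Nat.strong_induction_on with
  | _ s ih =>
  rcases s.eq_zero_or_pos with rfl | hs
  · simp [starsSet_zero]
  calc ((starsSet k s).ncard : ℝ)
      ≤ ∑ b : Fin k → Bool with 0 < starCount b ∧ starCount b ≤ s, c ^ (s - starCount b) := by
        refine (Nat.cast_le.mpr (ncard_starsSet_le_sum hs)).trans ?_
        push_cast
        exact sum_le_sum fun b hb => ih _ (by simp only [mem_filter] at hb; omega)
    _ = c ^ s *
          ∑ b : Fin k → Bool with 0 < starCount b ∧ starCount b ≤ s, c⁻¹ ^ starCount b := by
        rw [mul_sum]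
        refine sum_congr rfl fun b hb => ?_
        simp only [mem_filter] at hb
        rw [inv_pow, ← div_eq_mul_inv, pow_sub₀ _ hc.ne' hb.2.2, div_eq_mul_inv]
    _ ≤ c ^ s * ∑ b : Fin k → Bool with 0 < starCount b, c⁻¹ ^ starCount b := by
        gcongr
        exact And.left
    _ = c ^ s * ((1 + c⁻¹) ^ k - 1) := by rw [sum_pow_starCount_of_pos, Fintype.card_fin]
    _ ≤ c ^ s := mul_le_of_le_one_right (by positivity) (by linarith)

lemma one_add_inv_pow_le_two {k : ℕ} (hk : 0 < k) : (1 + (3 * k / 2 : ℝ)⁻¹) ^ k ≤ 2 := by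
  have hk' : (0 : ℝ) < k := by exact_mod_cast hk
  calc (1 + (3 * k / 2 : ℝ)⁻¹) ^ k = (1 - (-2 / 3) / k) ^ k := by
        congr 1; field_simp; ring
    _ ≤ Real.exp (-(-2 / 3)) := Real.one_sub_div_pow_le_exp_neg (by linarith)
    _ ≤ Real.exp (Real.log 2) := by
        gcongr; linarith [Real.log_two_gt_d9]
    _ = 2 := Real.exp_log two_pos

lemma ncard_starsSet_le {k : ℕ} (hk : 0 < k) (s : ℕ) :
    ((starsSet k s).ncard : ℝ) ≤ (3 * k / 2) ^ s :=
  ncard_starsSet_le_pow (by positivity) (one_add_inv_pow_le_two hk) s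

theorem Nat.choose_sub_mul_pow_le {n ℓ s : ℕ} (hs : s ≤ ℓ) :
    n.choose (ℓ - s) * (n - ℓ) ^ s ≤ n.choose ℓ * ℓ ^ s := by
  induction s with
  | zero => simp
  | succ s ih =>
    have step : n.choose (ℓ - (s + 1)) * (n - ℓ) ≤ n.choose (ℓ - s) * ℓ := by
      have h := Nat.choose_succ_right_eq n (ℓ - (s + 1))
      rw [show ℓ - (s + 1) + 1 = ℓ - s by omega] at h
      calc n.choose (ℓ - (s + 1)) * (n - ℓ)
          ≤ n.choose (ℓ - (s + 1)) * (n - (ℓ - (s + 1))) := by gcongr; omega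
        _ = n.choose (ℓ - s) * (ℓ - s) := h.symm
        _ ≤ n.choose (ℓ - s) * ℓ := by gcongr; omega
    calc n.choose (ℓ - (s + 1)) * (n - ℓ) ^ (s + 1)
        = n.choose (ℓ - (s + 1)) * (n - ℓ) * (n - ℓ) ^ s := by ring
      _ ≤ n.choose (ℓ - s) * ℓ * (n - ℓ) ^ s := by gcongr
      _ = n.choose (ℓ - s) * (n - ℓ) ^ s * ℓ := by ring
      _ ≤ n.choose ℓ * ℓ ^ s * ℓ := Nat.mul_le_mul_right _ (ih (by omega))
      _ = n.choose ℓ * ℓ ^ (s + 1) := by ring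

lemma choose_sub_div_choose_le {n ℓ s : ℕ} (hs : s ≤ ℓ) (hℓn : ℓ < n) :
    (n.choose (ℓ - s) : ℝ) / n.choose ℓ ≤ (ℓ / (n - ℓ : ℝ)) ^ s := by
  have hnℓ : (0 : ℝ) < n - ℓ := by rw [sub_pos]; exact_mod_cast hℓn
  have hchoose : (0 : ℝ) < n.choose ℓ := by exact_mod_cast Nat.choose_pos hℓn.le
  rw [div_pow, div_le_div_iff₀ hchoose (by positivity)]
  have := Nat.choose_sub_mul_pow_le (n := n) hs
  rw [← Nat.cast_le (α := ℝ)] at this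
  push_cast [Nat.cast_sub hℓn.le] at this
  linarith

theorem stars_ratio_bound_general (n ℓ s k : ℕ) (hs : 0 < s)
    (hk : 0 < k) (hsl : s ≤ ℓ) (hln : ℓ ≤ n)
    (p : ℝ) (hp : p = (ℓ : ℝ) / n) (hp7 : p < 1 / 7) :
    ((n.choose (ℓ - s) * 2 ^ (n - (ℓ - s)) : ℕ) : ℝ) * (starsSet k s).ncard * 2 ^ s
        / ((n.choose ℓ * 2 ^ (n - ℓ) : ℕ) : ℝ)
      < (7 * p * k) ^ s := by
  have hℓ : (0 : ℝ) < ℓ := by exact_mod_cast hs.trans_le hsl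
  have hn : (0 : ℝ) < n := hℓ.trans_le (by exact_mod_cast hln)
  have h7 : 7 * (ℓ : ℝ) < n := by rw [hp, div_lt_iff₀ hn] at hp7; linarith
  have hℓn : ℓ < n := by exact_mod_cast (by linarith : (ℓ : ℝ) < n)
  have hchoose : (n.choose ℓ : ℝ) ≠ 0 := by exact_mod_cast (Nat.choose_pos hln).ne'
  have hnℓ : (0 : ℝ) < n - ℓ := by linarith
  have hbase : 6 * k * (ℓ / (n - ℓ : ℝ)) < 7 * p * k := by
    have hk' : (0 : ℝ) < k := by exact_mod_cast hk
    rw [hp, show 6 * k * (ℓ / (n - ℓ : ℝ)) = 6 * k * ℓ / (n - ℓ) by ring,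
      show 7 * (ℓ / n : ℝ) * k = 7 * k * ℓ / n by ring, div_lt_div_iff₀ hnℓ hn]
    nlinarith [mul_pos hk' hℓ]
  calc ((n.choose (ℓ - s) * 2 ^ (n - (ℓ - s)) : ℕ) : ℝ) * (starsSet k s).ncard * 2 ^ s
        / ((n.choose ℓ * 2 ^ (n - ℓ) : ℕ) : ℝ)
      = (n.choose (ℓ - s) : ℝ) / n.choose ℓ * (4 ^ s * (starsSet k s).ncard) := by
        rw [show n - (ℓ - s) = n - ℓ + s by omega]
        push_cast
        rw [pow_add, show (4 : ℝ) ^ s = 2 ^ s * 2 ^ s by rw [← mul_pow]; norm_num]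
        field_simp
    _ ≤ (ℓ / (n - ℓ : ℝ)) ^ s * (4 ^ s * (3 * k / 2) ^ s) := by
        gcongr
        · exact choose_sub_div_choose_le hsl hℓn
        · exact ncard_starsSet_le hk s
    _ = (6 * k * (ℓ / (n - ℓ : ℝ))) ^ s := by rw [← mul_pow, ← mul_pow]; ring_nf
    _ < (7 * p * k) ^ s :=
        pow_lt_pow_left₀ hbase (by have := div_nonneg hℓ.le hnℓ.le; positivity) hs.ne'

/-- for positive integers `n, ℓ, s, k` with `s ≤ ℓ ≤ n` and
`p = ℓ/n < 1/7`, we have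
`(|R^{ℓ-s}_n| · |stars(k,s)| · 2^s) / |R^ℓ_n| < (7pk)^s`,
where `|R^ℓ_n| = C(n,ℓ)·2^{n-ℓ}`. -/
theorem stars_ratio_bound (n ℓ s k : ℕ) (hn : 0 < n) (hℓ : 0 < ℓ) (hs : 0 < s)
    (hk : 0 < k) (hsl : s ≤ ℓ) (hln : ℓ ≤ n)
    (p : ℝ) (hp : p = (ℓ : ℝ) / n) (hp7 : p < 1 / 7) :
    ((n.choose (ℓ - s) * 2 ^ (n - (ℓ - s)) : ℕ) : ℝ) * (starsSet k s).ncard * 2 ^ s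
        / ((n.choose ℓ * 2 ^ (n - ℓ) : ℕ) : ℝ)
      < (7 * p * k) ^ s :=
  stars_ratio_bound_general n ℓ s k hs hk hsl hln p hp hp7
end

section
/- Let f ∈ DNF^{k,r} and let ρ be a random restriction with parameter p ≤ 1/(28k). Then E_ρ[L₁(f|ρ)] ≤ 2r, where L₁(g) = ∑_S |ĝ(S)| is the total L₁-norm of the Fourier coefficients of the restricted function. -/
/-- Fourier coefficient `f̂(S) = E_x[f(x)·χ_S(x)]` of `f : {−1,1}^n → ℝ`,
identifying `{0,1}` with `{−1,1}` via `b ↦ 2b−1` (`true ↦ 1`, `false ↦ −1`). -/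
noncomputable def pbFourier {n : ℕ} (f : (Fin n → Bool) → ℝ)
    (S : Finset (Fin n)) : ℝ :=
  (∑ x : Fin n → Bool, f x * ∏ i ∈ S, (if x i then (1 : ℝ) else -1)) / 2 ^ n

/-- `f ∈ DNF^{k,r}`: `f = (2/r)·F − 1` for a pseudo-Boolean k-DNF `F` with
constants in `{0,…,r}`. -/
def IsPBDNF {n : ℕ} (k r : ℕ) (f : (Fin n → Bool) → ℝ) : Prop :=
  ∃ (m : ℕ) (a : Fin m → ℕ) (A B : Fin m → Finset (Fin n)),
    (∀ t, a t ≤ r) ∧ (∀ t, (A t).card + (B t).card ≤ k) ∧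
    ∀ x, f x = 2 / r *
      ((Finset.univ.sup fun t =>
        if (∀ i ∈ A t, x i = true) ∧ (∀ j ∈ B t, x j = false) then a t else 0 : ℕ) : ℝ)
      - 1

/-- The restriction `f|ρ` of `f` by `ρ : Fin n → Option Bool` (`none` = `★`,
i.e. a live variable); dead variables are fixed according to `ρ`. -/
def restrictFun {n : ℕ} (f : (Fin n → Bool) → ℝ) (ρ : Fin n → Option Bool) :
    (Fin n → Bool) → ℝ :=
  fun x => f fun i => (ρ i).getD (x i)

/-!
Order the clauses by decreasing weight and follow the canonical decision tree of `f|ρ`: read the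
clauses in turn, skip a falsified one, otherwise query its free variables. The satisfying branch
is a leaf on which `f|ρ` is constant, since the current clause has the largest weight among those
not yet falsified; every other branch falsifies the clause. Splitting on a variable at most adds
the Fourier `L₁`-norms of the two halves, and a constant in `[-1, 1]` has norm at most `1`, so
`L₁(f|ρ)` is at most the number of leaves.

The expected number of leaves is at most `2`. For the induction on the clauses this is
strengthened to `E[φ · leaves] ≤ 2 E[φ]` for every nonnegative `φ` growing under refinement of
restrictions, a class stable under conditioning on the first clause being falsified or on a
branch being taken. A restriction leaving the first clause alive with star set `Y` is
`(2p/(1-p))^|Y|` times as likely as its satisfying completion, and its `2^|Y| - 1` falsifying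
branches cost at most `2` each by induction; summing over `Y ⊆ vars` bounds the total by
`2 (1 + 4p/(1-p))^k - 1 ≤ 2` once `p ≤ 1/(28k)`.
-/

open Finset

open scoped Classical

noncomputable section

abbrev Restriction (n : ℕ) := Fin n → Option Bool

namespace Restriction

variable {n : ℕ}

/-- Fix every variable of `Y`, to `true` on `y` and to `false` on `Y \ y`. -/
def assign (ρ : Restriction n) (Y y : Finset (Fin n)) : Restriction n :=
  fun i => if i ∈ Y then some (decide (i ∈ y)) else ρ i

def free (ρ : Restriction n) (Y : Finset (Fin n)) : Restriction n :=
  fun i => if i ∈ Y then none else ρ i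

def FreeOn (Y : Finset (Fin n)) (ρ : Restriction n) : Prop := ∀ i ∈ Y, ρ i = none

def FixesOn (Y y : Finset (Fin n)) (ρ : Restriction n) : Prop :=
  ∀ i ∈ Y, ρ i = some (decide (i ∈ y))

def Refines (σ ρ : Restriction n) : Prop := ∀ i b, ρ i = some b → σ i = some b

def complete (ρ : Restriction n) (x : Fin n → Bool) : Fin n → Bool := fun i => (ρ i).getD (x i)

def prob (p : ℝ) (ρ : Restriction n) : ℝ := ∏ i, if ρ i = none then p else (1 - p) / 2

def expectation (p : ℝ) (g : Restriction n → ℝ) : ℝ := ∑ ρ, prob p ρ * g ρ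

def RefinementMonotone (φ : Restriction n → ℝ) : Prop := ∀ ⦃ρ σ⦄, Refines σ ρ → φ ρ ≤ φ σ

lemma refines_free (ρ : Restriction n) (Y : Finset (Fin n)) : Refines ρ (ρ.free Y) := by
  intro i b h
  by_cases hi : i ∈ Y <;> simp_all [free]

lemma Refines.free {σ ρ : Restriction n} (h : Refines σ ρ) (Y : Finset (Fin n)) :
    Refines (σ.free Y) (ρ.free Y) := by
  intro i b hb
  by_cases hi : i ∈ Y <;> simp only [Restriction.free, hi, if_true, if_false, reduceCtorEq] at hb ⊢
  exact h i b hb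

lemma FixesOn.of_refines {σ ρ : Restriction n} {Y y : Finset (Fin n)} (h : Refines σ ρ)
    (hρ : FixesOn Y y ρ) : FixesOn Y y σ :=
  fun i hi => h i _ (hρ i hi)

lemma fixesOn_assign (ρ : Restriction n) (Y y : Finset (Fin n)) : FixesOn Y y (ρ.assign Y y) := by
  intro i hi
  simp [assign, hi]

lemma freeOn_free (ρ : Restriction n) (Y : Finset (Fin n)) : FreeOn Y (ρ.free Y) := by
  intro i hi
  simp [free, hi]

lemma free_assign (ρ : Restriction n) (Y y : Finset (Fin n)) (h : FreeOn Y ρ) :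
    (ρ.assign Y y).free Y = ρ := by
  funext i
  by_cases hi : i ∈ Y <;> simp [assign, free, hi, h i]

lemma assign_free (σ : Restriction n) (Y y : Finset (Fin n)) (h : FixesOn Y y σ) :
    (σ.free Y).assign Y y = σ := by
  funext i
  by_cases hi : i ∈ Y <;> simp [assign, free, hi, h i]

lemma fixesOn_sdiff_free {σ : Restriction n} {S Y y : Finset (Fin n)} :
    FixesOn (S \ Y) y (σ.free Y) ↔ FixesOn (S \ Y) y σ := by
  refine forall₂_congr fun i hi => ?_
  simp [free, (mem_sdiff.1 hi).2]

lemma FixesOn.of_sdiff {σ : Restriction n} {S Y y : Finset (Fin n)} (hY : FixesOn Y y σ)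
    (hS : FixesOn (S \ Y) y σ) : FixesOn S y σ := by
  intro i hi
  by_cases hiY : i ∈ Y
  · exact hY i hiY
  · exact hS i (mem_sdiff.2 ⟨hi, hiY⟩)

lemma complete_update {ρ : Restriction n} {i : Fin n} (hi : ρ i = none) (b : Bool)
    (x : Fin n → Bool) :
    ρ.complete (Function.update x i b) = complete (Function.update ρ i (some b)) x := by
  funext j
  by_cases hj : j = i
  · subst hj; simp [complete, hi]
  · simp [complete, hj]

lemma assign_empty (ρ : Restriction n) (y : Finset (Fin n)) : ρ.assign ∅ y = ρ := by
  funext i; simp [assign]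

lemma assign_insert (ρ : Restriction n) (i : Fin n) (Y y : Finset (Fin n)) :
    ρ.assign (insert i Y) y = assign (Function.update ρ i (some (decide (i ∈ y)))) Y y := by
  funext j
  by_cases hj : j = i
  · subst hj; simp [assign]
  · by_cases hjY : j ∈ Y <;> simp [assign, hj, hjY]

lemma assign_congr (ρ : Restriction n) {Y y y' : Finset (Fin n)} (h : ∀ i ∈ Y, i ∈ y ↔ i ∈ y') :
    ρ.assign Y y = ρ.assign Y y' := by
  funext i
  by_cases hi : i ∈ Y <;> simp [assign, hi, h i]

section Probability

variable {p : ℝ}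

lemma prob_nonneg (hp0 : 0 ≤ p) (hp1 : p ≤ 1) (ρ : Restriction n) : 0 ≤ prob p ρ :=
  prod_nonneg fun i _ => by split_ifs <;> linarith

lemma expectation_one : expectation p (fun (_ : Restriction n) => 1) = 1 := by
  have hone : ∑ o : Option Bool, (if o = none then p else (1 - p) / 2) = 1 := by
    simp [Fintype.sum_option]; ring
  simp only [expectation, prob, mul_one, ← Fintype.prod_sum fun (_ : Fin n) (o : Option Bool) =>
    if o = none then p else (1 - p) / 2, hone, prod_const_one]

lemma expectation_mono (hp0 : 0 ≤ p) (hp1 : p ≤ 1) {g h : Restriction n → ℝ}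
    (hgh : ∀ ρ, g ρ ≤ h ρ) :
    expectation p g ≤ expectation p h :=
  sum_le_sum fun ρ _ => mul_le_mul_of_nonneg_left (hgh ρ) (prob_nonneg hp0 hp1 ρ)

/-- Each freed variable multiplies the probability by `p / ((1 - p) / 2)`. -/
lemma prob_eq_pow_mul_prob_assign (hp1 : p < 1) {ρ : Restriction n} {Y : Finset (Fin n)}
    (hY : FreeOn Y ρ) (y : Finset (Fin n)) :
    prob p ρ = (2 * p / (1 - p)) ^ Y.card * prob p (ρ.assign Y y) := by
  have hfactor : ∀ i, (if ρ i = none then p else (1 - p) / 2) =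
      (if i ∈ Y then 2 * p / (1 - p) else 1) *
        (if ρ.assign Y y i = none then p else (1 - p) / 2) := by
    intro i
    by_cases hi : i ∈ Y
    · simp only [hY i hi, assign, hi, if_true, reduceCtorEq, if_false]
      field_simp [(sub_pos.2 hp1).ne']
    · simp [assign, hi]
  simp only [prob, hfactor, prod_mul_distrib, Fintype.prod_ite_mem, prod_const]

/-- Freeing the variables of `Y` is a bijection from the restrictions fixing `Y` to `y` onto those
leaving `Y` free, and it scales probabilities by `(2p/(1-p))^|Y|`. -/
lemma expectation_freeOn_eq (hp1 : p < 1) (Y y : Finset (Fin n))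
    (g : Restriction n → Restriction n → ℝ) :
    expectation p (fun ρ => if FreeOn Y ρ then g ρ (ρ.assign Y y) else 0) =
      (2 * p / (1 - p)) ^ Y.card *
        expectation p (fun σ => if FixesOn Y y σ then g (σ.free Y) σ else 0) := by
  simp only [expectation, mul_ite, mul_zero, ← sum_filter, mul_sum]
  refine sum_nbij' (fun ρ => ρ.assign Y y) (fun σ => σ.free Y) ?_ ?_ ?_ ?_ ?_
  · simp [fixesOn_assign]
  · simp [freeOn_free]
  · intro ρ hρ; exact free_assign ρ Y y (mem_filter.1 hρ).2
  · intro σ hσ; exact assign_free σ Y y (mem_filter.1 hσ).2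
  · intro ρ hρ
    have hρ := (mem_filter.1 hρ).2
    rw [free_assign ρ Y y hρ, prob_eq_pow_mul_prob_assign hp1 hρ y]
    ring

end Probability

end Restriction

section FourierL1

variable {n : ℕ}

def fourierL1 (g : (Fin n → Bool) → ℝ) : ℝ := ∑ S, |pbFourier g S|

def walsh (S : Finset (Fin n)) (x : Fin n → Bool) : ℝ := ∏ i ∈ S, if x i then (1 : ℝ) else -1

lemma pbFourier_eq (g : (Fin n → Bool) → ℝ) (S : Finset (Fin n)) :
    pbFourier g S = (∑ x, g x * walsh S x) / 2 ^ n := rfl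

lemma sum_walsh (S : Finset (Fin n)) : ∑ x, walsh S x = if S = ∅ then 2 ^ n else 0 := by
  have hfactor : ∀ i, ∑ b : Bool, (if i ∈ S then (if b then (1 : ℝ) else -1) else 1) =
      if i ∈ S then 0 else 2 := by
    intro i; by_cases hi : i ∈ S <;> simp [hi]
  calc ∑ x, walsh S x
      = ∑ x : Fin n → Bool, ∏ i, if i ∈ S then (if x i then (1 : ℝ) else -1) else 1 := by
        simp only [walsh, Fintype.prod_ite_mem]
    _ = ∏ i, if i ∈ S then (0 : ℝ) else 2 := by
        rw [← Fintype.prod_sum fun i (b : Bool) =>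
          if i ∈ S then (if b then (1 : ℝ) else -1) else 1]
        simp only [hfactor]
    _ = if S = ∅ then 2 ^ n else 0 := by
        split_ifs with hS
        · simp [hS]
        · obtain ⟨i, hi⟩ := nonempty_iff_ne_empty.2 hS
          exact prod_eq_zero (mem_univ i) (if_pos hi)

lemma pbFourier_const (c : ℝ) (S : Finset (Fin n)) :
    pbFourier (fun _ => c) S = if S = ∅ then c else 0 := by
  rw [pbFourier_eq, ← mul_sum, sum_walsh]
  split_ifs
  · field_simp
  · simp

lemma fourierL1_const (c : ℝ) : fourierL1 (fun _ : Fin n → Bool => c) = |c| := by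
  simp only [fourierL1, pbFourier_const, apply_ite, abs_zero, sum_ite_eq', mem_univ, if_true]

lemma fourierL1_add_le (g h : (Fin n → Bool) → ℝ) :
    fourierL1 (g + h) ≤ fourierL1 g + fourierL1 h := by
  simp only [fourierL1, ← sum_add_distrib]
  refine sum_le_sum fun S _ => ?_
  simp only [pbFourier_eq, Pi.add_apply, add_mul, sum_add_distrib, add_div]
  exact abs_add_le _ _

lemma fourierL1_smul (c : ℝ) (g : (Fin n → Bool) → ℝ) :
    fourierL1 (c • g) = |c| * fourierL1 g := by
  simp only [fourierL1, pbFourier_eq, Pi.smul_apply, smul_eq_mul, mul_assoc, ← mul_sum,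
    mul_div_assoc, abs_mul]

lemma walsh_singleton_mul (i : Fin n) (S : Finset (Fin n)) (x : Fin n → Bool) :
    walsh {i} x * walsh S x = walsh (symmDiff {i} S) x := by
  have hsq : (if x i then (1 : ℝ) else -1) * (if x i then (1 : ℝ) else -1) = 1 := by
    split_ifs <;> norm_num
  by_cases hi : i ∈ S
  · rw [show symmDiff {i} S = S.erase i by
      ext; simp only [mem_symmDiff, mem_singleton, mem_erase]; grind]
    simp only [walsh, prod_singleton, ← mul_prod_erase S _ hi]
    rw [← mul_assoc, hsq, one_mul]
  · rw [show symmDiff {i} S = insert i S by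
      ext; simp only [mem_symmDiff, mem_singleton, mem_insert]; grind]
    simp only [walsh, prod_singleton, prod_insert hi]

/-- Multiplying by the character of the variable `i` permutes the Fourier coefficients. -/
lemma fourierL1_walsh_mul (i : Fin n) (g : (Fin n → Bool) → ℝ) :
    fourierL1 (walsh {i} * g) = fourierL1 g := by
  calc fourierL1 (walsh {i} * g) = ∑ S, |pbFourier g (symmDiff {i} S)| := by
        refine sum_congr rfl fun S _ => ?_
        rw [pbFourier_eq, pbFourier_eq]
        congr 3
        funext x
        rw [Pi.mul_apply, ← walsh_singleton_mul]
        ring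
    _ = fourierL1 g :=
        Fintype.sum_bijective _ (symmDiff_right_involutive ({i} : Finset (Fin n))).bijective _ _
          fun _ => rfl

/-- Splitting on the variable `i`: `g = (g₀ + g₁)/2 + χᵢ (g₁ - g₀)/2`. -/
lemma fourierL1_le_add_update (g : (Fin n → Bool) → ℝ) (i : Fin n) :
    fourierL1 g ≤ fourierL1 (fun x => g (Function.update x i false)) +
      fourierL1 (fun x => g (Function.update x i true)) := by
  set g₀ := fun x => g (Function.update x i false)
  set g₁ := fun x => g (Function.update x i true)
  have hsplit : g = (1 / 2 : ℝ) • (g₀ + g₁) + (1 / 2 : ℝ) • (walsh {i} * (g₁ + (-1 : ℝ) • g₀)) := by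
    funext x
    have hupd := Function.update_eq_self i x
    cases hx : x i <;> rw [hx] at hupd <;> simp [g₀, g₁, walsh, hx, hupd] <;> ring
  have h₂ := fourierL1_add_le g₁ ((-1 : ℝ) • g₀)
  rw [fourierL1_smul, abs_neg, abs_one, one_mul] at h₂
  calc fourierL1 g
      ≤ 1 / 2 * fourierL1 (g₀ + g₁) + 1 / 2 * fourierL1 (g₁ + (-1 : ℝ) • g₀) := by
        conv_lhs => rw [hsplit]
        refine (fourierL1_add_le _ _).trans_eq ?_
        rw [fourierL1_smul, fourierL1_smul, fourierL1_walsh_mul]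
        norm_num
    _ ≤ fourierL1 g₀ + fourierL1 g₁ := by linarith [fourierL1_add_le g₀ g₁]

end FourierL1

section Restrict

open Restriction

variable {n : ℕ}

lemma restrictFun_update (g : (Fin n → Bool) → ℝ) {ρ : Restriction n} {i : Fin n} (hi : ρ i = none)
    (b : Bool) (x : Fin n → Bool) :
    restrictFun g ρ (Function.update x i b) = restrictFun g (Function.update ρ i (some b)) x :=
  congrArg g (complete_update hi b x)

lemma fourierL1_restrictFun_le_sum_assign (g : (Fin n → Bool) → ℝ) (Y : Finset (Fin n)) :
    ∀ {ρ : Restriction n}, FreeOn Y ρ →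
      fourierL1 (restrictFun g ρ) ≤ ∑ y ∈ Y.powerset, fourierL1 (restrictFun g (ρ.assign Y y)) := by
  induction Y using Finset.induction_on with
  | empty => intro ρ _; simp [assign_empty]
  | @insert i Y hiY ih =>
    intro ρ hρ
    have hfree : ∀ b, FreeOn Y (Function.update ρ i (some b)) := fun b j hj => by
      rw [Function.update_of_ne (ne_of_mem_of_not_mem hj hiY)]
      exact hρ j (mem_insert_of_mem hj)
    have hassign : ∀ y ⊆ Y, ∀ b, ρ.assign (insert i Y) (if b then insert i y else y) =
        assign (Function.update ρ i (some b)) Y y := by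
      intro y hy b
      rw [assign_insert]
      have hiy : i ∉ y := fun h => hiY (hy h)
      cases b
      · simp [hiy]
      · simp only [if_true, mem_insert_self, decide_true]
        exact assign_congr _ fun j hj => by simp [ne_of_mem_of_not_mem hj hiY]
    rw [sum_powerset_insert hiY]
    calc fourierL1 (restrictFun g ρ)
        ≤ fourierL1 (restrictFun g (Function.update ρ i (some false))) +
            fourierL1 (restrictFun g (Function.update ρ i (some true))) := by
          simpa only [restrictFun_update g (hρ i (mem_insert_self i Y))] using
            fourierL1_le_add_update (restrictFun g ρ) i
      _ ≤ _ := by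
          gcongr
          · refine (ih (hfree false)).trans_eq (sum_congr rfl fun y hy => ?_)
            rw [← hassign y (mem_powerset.1 hy) false, if_neg Bool.false_ne_true]
          · refine (ih (hfree true)).trans_eq (sum_congr rfl fun y hy => ?_)
            rw [← hassign y (mem_powerset.1 hy) true, if_pos rfl]

end Restrict

/-- The conjunction of the literals `xᵢ` for `i ∈ pos` and `x̄ᵢ` for `i ∈ vars \ pos`, with a
weight. -/
structure Term (n : ℕ) where
  vars : Finset (Fin n)
  pos : Finset (Fin n)
  weight : ℕ

namespace Term

variable {n : ℕ} (t : Term n)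

def Sat (x : Fin n → Bool) : Prop := ∀ i ∈ t.vars, x i = decide (i ∈ t.pos)

def eval (x : Fin n → Bool) : ℕ := if t.Sat x then t.weight else 0

def Falsified (ρ : Restriction n) : Prop := ∃ i ∈ t.vars, ρ i = some (!decide (i ∈ t.pos))

def stars (ρ : Restriction n) : Finset (Fin n) := t.vars.filter fun i => ρ i = none

def Alive (Y : Finset (Fin n)) (ρ : Restriction n) : Prop :=
  Restriction.FreeOn Y ρ ∧ Restriction.FixesOn (t.vars \ Y) t.pos ρ

variable {t} {ρ σ : Restriction n}

lemma Falsified.of_refines (h : Restriction.Refines σ ρ) (hρ : t.Falsified ρ) : t.Falsified σ :=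
  let ⟨i, hi, hρi⟩ := hρ
  ⟨i, hi, h i _ hρi⟩

lemma not_sat_complete_of_falsified (h : t.Falsified ρ) (x : Fin n → Bool) :
    ¬ t.Sat (ρ.complete x) := by
  obtain ⟨i, hi, hρi⟩ := h
  intro hsat
  have := hsat i hi
  simp [Restriction.complete, hρi] at this

lemma sat_complete_assign_stars (h : ¬ t.Falsified ρ) (x : Fin n → Bool) :
    t.Sat ((ρ.assign (t.stars ρ) (t.stars ρ ∩ t.pos)).complete x) := by
  intro i hi
  by_cases hstar : ρ i = none
  · have : i ∈ t.stars ρ := mem_filter.2 ⟨hi, hstar⟩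
    simp [Restriction.complete, Restriction.assign, this]
  · have hns : i ∉ t.stars ρ := fun hs => hstar (mem_filter.1 hs).2
    obtain ⟨b, hb⟩ := Option.ne_none_iff_exists'.1 hstar
    have : b = decide (i ∈ t.pos) := by
      by_contra hne
      exact h ⟨i, hi, by rw [hb]; cases b <;> simp_all⟩
    simp [Restriction.complete, Restriction.assign, hns, hb, this]

lemma falsified_assign {Y y : Finset (Fin n)} (hY : Y ⊆ t.vars) (hy : y ⊆ Y) (hne : y ≠ Y ∩ t.pos) :
    t.Falsified (ρ.assign Y y) := by
  obtain ⟨i, hiY, hiy⟩ : ∃ i ∈ Y, ¬ (i ∈ y ↔ i ∈ t.pos) := by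
    by_contra! hall
    exact hne (ext fun i => ⟨fun h => mem_inter.2 ⟨hy h, (hall i (hy h)).1 h⟩,
      fun h => (hall i (mem_inter.1 h).1).2 (mem_inter.1 h).2⟩)
  refine ⟨i, hY hiY, ?_⟩
  simp only [Restriction.assign, hiY, if_true, Option.some.injEq]
  by_cases hp : i ∈ t.pos <;> simp_all

lemma not_falsified_of_fixesOn (h : Restriction.FixesOn t.vars t.pos ρ) : ¬ t.Falsified ρ := by
  rintro ⟨i, hi, hρi⟩
  rw [h i hi] at hρi
  cases hp : decide (i ∈ t.pos) <;> simp_all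

lemma not_falsified_and_stars_eq_iff {Y : Finset (Fin n)} (hY : Y ⊆ t.vars) :
    ¬ t.Falsified ρ ∧ t.stars ρ = Y ↔ t.Alive Y ρ := by
  constructor
  · rintro ⟨hf, rfl⟩
    refine ⟨fun i hi => (mem_filter.1 hi).2, fun i hi => ?_⟩
    obtain ⟨hiv, hns⟩ := mem_sdiff.1 hi
    obtain ⟨b, hb⟩ := Option.ne_none_iff_exists'.1 fun h => hns (mem_filter.2 ⟨hiv, h⟩)
    rw [hb]
    by_contra hne
    exact hf ⟨i, hiv, by rw [hb]; cases b <;> simp_all⟩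
  · rintro ⟨hfree, hfix⟩
    refine ⟨fun ⟨i, hi, hρi⟩ => ?_, ext fun i => ?_⟩
    · by_cases hiY : i ∈ Y
      · simp [hfree i hiY] at hρi
      · rw [hfix i (mem_sdiff.2 ⟨hi, hiY⟩)] at hρi
        cases hp : decide (i ∈ t.pos) <;> simp_all
    · by_cases hiY : i ∈ Y
      · simp [stars, hiY, hY hiY, hfree i hiY]
      · by_cases hi : i ∈ t.vars
        · simp [stars, hiY, hi, hfix i (mem_sdiff.2 ⟨hi, hiY⟩)]
        · simp [stars, hiY, hi]

end Term

section DNF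

variable {n : ℕ}

def dnfValue (L : List (Term n)) (x : Fin n → Bool) : ℕ :=
  ((L : Multiset (Term n)).map (·.eval x)).sup

lemma dnfValue_nil (x : Fin n → Bool) : dnfValue [] x = 0 := rfl

lemma dnfValue_cons (t : Term n) (L : List (Term n)) (x : Fin n → Bool) :
    dnfValue (t :: L) x = max (t.eval x) (dnfValue L x) := by
  simp [dnfValue, ← Multiset.cons_coe]

lemma dnfValue_le {L : List (Term n)} {c : ℕ} (h : ∀ t ∈ L, t.weight ≤ c) (x : Fin n → Bool) :
    dnfValue L x ≤ c := by
  refine Multiset.sup_le.2 fun a ha => ?_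
  obtain ⟨t, ht, rfl⟩ := Multiset.mem_map.1 ha
  unfold Term.eval
  split_ifs
  exacts [h t ht, Nat.zero_le c]

variable (r : ℕ) in
def dnfFun (L : List (Term n)) : (Fin n → Bool) → ℝ := fun x => 2 / r * dnfValue L x - 1

/-- The number of leaves of the canonical decision tree of `L` under `ρ`. -/
def leafCount : List (Term n) → Restriction n → ℕ
  | [], _ => 1
  | t :: ts, ρ =>
    if t.Falsified ρ then leafCount ts ρ
    else 1 + ∑ y ∈ (t.stars ρ).powerset.erase (t.stars ρ ∩ t.pos),
      leafCount ts (ρ.assign (t.stars ρ) y)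

lemma restrictFun_dnfFun_cons_of_falsified {r : ℕ} {t : Term n} {L : List (Term n)}
    {ρ : Restriction n} (h : t.Falsified ρ) :
    restrictFun (dnfFun r (t :: L)) ρ = restrictFun (dnfFun r L) ρ := by
  funext x
  change dnfFun r (t :: L) (ρ.complete x) = dnfFun r L (ρ.complete x)
  simp [dnfFun, dnfValue_cons, Term.eval, Term.not_sat_complete_of_falsified h]

lemma restrictFun_dnfFun_cons_of_sat {r : ℕ} {t : Term n} {L : List (Term n)} {ρ : Restriction n}
    (hL : ∀ u ∈ L, u.weight ≤ t.weight) (h : ∀ x, t.Sat (ρ.complete x)) :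
    restrictFun (dnfFun r (t :: L)) ρ = fun _ => (2 / r * t.weight - 1 : ℝ) := by
  funext x
  change dnfFun r (t :: L) (ρ.complete x) = _
  simp [dnfFun, dnfValue_cons, Term.eval, h x, dnfValue_le hL]

lemma abs_two_div_mul_sub_one_le {r a : ℕ} (hr : 1 ≤ r) (ha : a ≤ r) :
    |2 / (r : ℝ) * a - 1| ≤ 1 := by
  have hr' : (0 : ℝ) < r := by exact_mod_cast hr
  have ha' : (a : ℝ) ≤ r := by exact_mod_cast ha
  rw [abs_le, div_mul_eq_mul_div, le_sub_iff_add_le, sub_le_iff_le_add, le_div_iff₀ hr',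
    div_le_iff₀ hr']
  constructor <;> nlinarith [(Nat.cast_nonneg a : (0 : ℝ) ≤ a)]

lemma fourierL1_restrictFun_dnfFun_le_leafCount {r : ℕ} (hr : 1 ≤ r) (L : List (Term n))
    (hsorted : L.Pairwise fun u v => v.weight ≤ u.weight) (hweight : ∀ t ∈ L, t.weight ≤ r)
    (ρ : Restriction n) : fourierL1 (restrictFun (dnfFun r L) ρ) ≤ leafCount L ρ := by
  induction L generalizing ρ with
  | nil =>
    have : restrictFun (dnfFun r []) ρ = fun _ => -1 := by
      funext x; simp [restrictFun, dnfFun, dnfValue_nil]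
    simp [this, fourierL1_const, leafCount]
  | cons t ts ih =>
    obtain ⟨hhead, htail⟩ := List.pairwise_cons.1 hsorted
    have ih' := ih htail fun u hu => hweight u (List.mem_cons_of_mem t hu)
    by_cases hf : t.Falsified ρ
    · simpa [leafCount, hf, restrictFun_dnfFun_cons_of_falsified hf] using ih' ρ
    set Y := t.stars ρ
    have hs : Y ∩ t.pos ∈ Y.powerset := mem_powerset.2 inter_subset_left
    have hleaf : fourierL1 (restrictFun (dnfFun r (t :: ts)) (ρ.assign Y (Y ∩ t.pos))) ≤ 1 := by
      rw [restrictFun_dnfFun_cons_of_sat hhead (Term.sat_complete_assign_stars hf), fourierL1_const]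
      exact abs_two_div_mul_sub_one_le hr (hweight t List.mem_cons_self)
    have hbranch : ∀ y ∈ Y.powerset.erase (Y ∩ t.pos),
        fourierL1 (restrictFun (dnfFun r (t :: ts)) (ρ.assign Y y)) ≤
          leafCount ts (ρ.assign Y y) := by
      intro y hy
      obtain ⟨hne, hy⟩ := mem_erase.1 hy
      rw [restrictFun_dnfFun_cons_of_falsified
        (Term.falsified_assign (Y := Y) (filter_subset _ _) (mem_powerset.1 hy) hne)]
      exact ih' _
    calc fourierL1 (restrictFun (dnfFun r (t :: ts)) ρ)
        ≤ ∑ y ∈ Y.powerset, fourierL1 (restrictFun (dnfFun r (t :: ts)) (ρ.assign Y y)) :=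
          fourierL1_restrictFun_le_sum_assign _ Y fun i hi => (mem_filter.1 hi).2
      _ ≤ 1 + ∑ y ∈ Y.powerset.erase (Y ∩ t.pos), (leafCount ts (ρ.assign Y y) : ℝ) := by
          rw [← add_sum_erase _ _ hs]
          exact add_le_add hleaf (sum_le_sum hbranch)
      _ = leafCount (t :: ts) ρ := by simp [leafCount, hf, Y]

end DNF

section Expectation

open Restriction

variable {n : ℕ} {p : ℝ}

lemma expectation_nonneg (hp0 : 0 ≤ p) (hp1 : p ≤ 1) {g : Restriction n → ℝ} (hg : ∀ ρ, 0 ≤ g ρ) :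
    0 ≤ expectation p g :=
  sum_nonneg fun ρ _ => mul_nonneg (prob_nonneg hp0 hp1 ρ) (hg ρ)

lemma expectation_add (g h : Restriction n → ℝ) :
    expectation p (fun ρ => g ρ + h ρ) = expectation p g + expectation p h := by
  simp only [expectation, mul_add, sum_add_distrib]

lemma expectation_sum {ι : Type*} (s : Finset ι) (g : ι → Restriction n → ℝ) :
    expectation p (fun ρ => ∑ i ∈ s, g i ρ) = ∑ i ∈ s, expectation p (g i) := by
  simp only [expectation, mul_sum]
  exact sum_comm

lemma RefinementMonotone.ite {P : Restriction n → Prop} [DecidablePred P]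
    (hP : ∀ ⦃ρ σ⦄, Refines σ ρ → P ρ → P σ)
    {φ : Restriction n → ℝ} (hφ : RefinementMonotone φ) (hφ0 : ∀ ρ, 0 ≤ φ ρ) :
    RefinementMonotone fun ρ => if P ρ then φ ρ else 0 := by
  intro ρ σ h
  by_cases hρ : P ρ
  · simp [hρ, hP h hρ, hφ h]
  · simp only [hρ, if_false]
    split_ifs
    exacts [hφ0 σ, le_rfl]

lemma expectation_alive_eq (hp1 : p < 1) (t : Term n) (Y y : Finset (Fin n))
    (F : Restriction n → Restriction n → ℝ) :
    expectation p (fun ρ => if t.Alive Y ρ then F ρ (ρ.assign Y y) else 0) =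
      (2 * p / (1 - p)) ^ Y.card * expectation p (fun σ =>
        if FixesOn Y y σ ∧ FixesOn (t.vars \ Y) t.pos σ then F (σ.free Y) σ else 0) := by
  have hsplit : ∀ ρ, (if t.Alive Y ρ then F ρ (ρ.assign Y y) else 0) =
      if FreeOn Y ρ then (if FixesOn (t.vars \ Y) t.pos ρ then F ρ (ρ.assign Y y) else 0)
      else 0 := by
    intro ρ
    by_cases h₁ : FreeOn Y ρ <;> by_cases h₂ : FixesOn (t.vars \ Y) t.pos ρ <;>
      simp [Term.Alive, h₁, h₂]
  simp only [hsplit, ite_and]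
  rw [expectation_freeOn_eq hp1 Y y (fun ρ σ => if FixesOn (t.vars \ Y) t.pos ρ then F ρ σ else 0)]
  simp only [fixesOn_sdiff_free]

lemma expectation_alive_le (hp0 : 0 ≤ p) (hp1 : p < 1) (t : Term n) (Y : Finset (Fin n))
    {φ : Restriction n → ℝ} (hφ : RefinementMonotone φ) (hφ0 : ∀ ρ, 0 ≤ φ ρ) :
    expectation p (fun ρ => if t.Alive Y ρ then φ ρ else 0) ≤
      (2 * p / (1 - p)) ^ Y.card *
        expectation p (fun σ => if FixesOn t.vars t.pos σ then φ σ else 0) := by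
  rw [expectation_alive_eq hp1 t Y t.pos fun ρ _ => φ ρ]
  refine mul_le_mul_of_nonneg_left (expectation_mono hp0 hp1.le fun σ => ?_) (by
    have : 0 ≤ 1 - p := by linarith
    positivity)
  split_ifs with hσ hσ'
  · exact hφ (refines_free σ Y)
  · exact absurd (hσ.1.of_sdiff hσ.2) hσ'
  · exact hφ0 σ
  · exact le_rfl

def LeafCountBound (p : ℝ) (L : List (Term n)) : Prop :=
  ∀ ψ : Restriction n → ℝ, (∀ ρ, 0 ≤ ψ ρ) → RefinementMonotone ψ →
    expectation p (fun ρ => ψ ρ * leafCount L ρ) ≤ 2 * expectation p ψ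

/-- The induction step on a non-satisfying branch `y`: conditioned on the alive event, the
restriction `ρ.assign Y y` is again a random restriction weighted by a monotone function. -/
lemma expectation_alive_mul_leafCount_le (hp0 : 0 ≤ p) (hp1 : p < 1) {ts : List (Term n)}
    (hts : LeafCountBound p ts)
    (t : Term n) (Y y : Finset (Fin n)) {φ : Restriction n → ℝ} (hφ : RefinementMonotone φ)
    (hφ0 : ∀ ρ, 0 ≤ φ ρ) :
    expectation p (fun ρ => if t.Alive Y ρ then φ ρ * leafCount ts (ρ.assign Y y) else 0) ≤
      2 * expectation p (fun ρ => if t.Alive Y ρ then φ ρ else 0) := by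
  set ψ : Restriction n → ℝ := fun σ =>
    if FixesOn Y y σ ∧ FixesOn (t.vars \ Y) t.pos σ then φ (σ.free Y) else 0
  have hψ : RefinementMonotone ψ :=
    RefinementMonotone.ite (P := fun σ => FixesOn Y y σ ∧ FixesOn (t.vars \ Y) t.pos σ)
      (fun _ _ h hσ => ⟨hσ.1.of_refines h, hσ.2.of_refines h⟩)
      (fun _ _ h => hφ (h.free Y)) (fun σ => hφ0 _)
  have hψ0 : ∀ σ, 0 ≤ ψ σ := fun σ => by simp only [ψ]; split_ifs <;> simp [hφ0]
  have hz : 0 ≤ (2 * p / (1 - p)) ^ Y.card := by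
    have : 0 ≤ 1 - p := by linarith
    positivity
  rw [expectation_alive_eq hp1 t Y y fun ρ σ => φ ρ * leafCount ts σ,
    expectation_alive_eq hp1 t Y y fun ρ _ => φ ρ]
  calc _ = (2 * p / (1 - p)) ^ Y.card * expectation p (fun σ => ψ σ * leafCount ts σ) := by
        simp only [ψ, ite_mul, zero_mul]
    _ ≤ (2 * p / (1 - p)) ^ Y.card * (2 * expectation p ψ) :=
        mul_le_mul_of_nonneg_left (hts ψ hψ0 hψ) hz
    _ = _ := by ring

lemma card_powerset_erase_sub_one {ι : Type*} [DecidableEq ι] {Y s : Finset ι}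
    (hs : s ∈ Y.powerset) :
    ((Y.powerset.erase s).card : ℝ) = 2 ^ Y.card - 1 := by
  rw [card_erase_of_mem hs, card_powerset, Nat.cast_sub Nat.one_le_two_pow]
  norm_num

/-- The satisfying leaf costs `1` and each of the `2 ^ |Y| - 1` other branches at most `2`. -/
lemma expectation_alive_mul_branches_le (hp0 : 0 ≤ p) (hp1 : p < 1) {ts : List (Term n)}
    (hts : LeafCountBound p ts)
    (t : Term n) (Y : Finset (Fin n)) {φ : Restriction n → ℝ} (hφ : RefinementMonotone φ)
    (hφ0 : ∀ ρ, 0 ≤ φ ρ) :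
    expectation p (fun ρ => if t.Alive Y ρ then
        φ ρ * (1 + ∑ y ∈ Y.powerset.erase (Y ∩ t.pos), (leafCount ts (ρ.assign Y y) : ℝ)) else 0) ≤
      (2 * p / (1 - p)) ^ Y.card * (2 * 2 ^ Y.card - 1) *
        expectation p (fun σ => if FixesOn t.vars t.pos σ then φ σ else 0) := by
  set A := expectation p (fun ρ => if t.Alive Y ρ then φ ρ else 0)
  have hA : 0 ≤ A := expectation_nonneg hp0 hp1.le fun ρ => by split_ifs <;> simp [hφ0]
  have hsplit : (fun ρ => if t.Alive Y ρ then
      φ ρ * (1 + ∑ y ∈ Y.powerset.erase (Y ∩ t.pos), (leafCount ts (ρ.assign Y y) : ℝ)) else 0) =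
      fun ρ => (if t.Alive Y ρ then φ ρ else 0) + ∑ y ∈ Y.powerset.erase (Y ∩ t.pos),
        if t.Alive Y ρ then φ ρ * leafCount ts (ρ.assign Y y) else 0 := by
    funext ρ
    split_ifs <;> simp only [mul_add, mul_one, mul_sum, add_zero, sum_const_zero]
  have hpow : (1 : ℝ) ≤ 2 * 2 ^ Y.card := by
    have := one_le_pow₀ (M₀ := ℝ) (a := 2) (by norm_num) (n := Y.card)
    linarith
  rw [hsplit, expectation_add, expectation_sum]
  calc A + ∑ y ∈ Y.powerset.erase (Y ∩ t.pos),
        expectation p (fun ρ => if t.Alive Y ρ then φ ρ * leafCount ts (ρ.assign Y y) else 0)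
      ≤ A + ∑ _y ∈ Y.powerset.erase (Y ∩ t.pos), 2 * A :=
        add_le_add le_rfl (sum_le_sum fun y _ =>
          expectation_alive_mul_leafCount_le hp0 hp1 hts t Y y hφ hφ0)
    _ = (2 * 2 ^ Y.card - 1) * A := by
        rw [sum_const, nsmul_eq_mul,
          card_powerset_erase_sub_one (mem_powerset.2 inter_subset_left)]
        ring
    _ ≤ _ := by
        rw [mul_comm _ (2 * 2 ^ Y.card - 1), mul_assoc]
        exact mul_le_mul_of_nonneg_left (expectation_alive_le hp0 hp1 t Y hφ hφ0) (by linarith)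

lemma sum_powerset_pow_mul_le_two {ι : Type*} (s : Finset ι) {z : ℝ} (hz : 0 ≤ z)
    (h : (1 + 2 * z) ^ s.card ≤ 3 / 2) :
    ∑ Y ∈ s.powerset, z ^ Y.card * (2 * 2 ^ Y.card - 1) ≤ 2 := by
  have h₂ := sum_pow_mul_eq_add_pow (2 * z) 1 s
  have h₁ := sum_pow_mul_eq_add_pow z 1 s
  simp only [one_pow, mul_one] at h₁ h₂
  have : 1 ≤ (z + 1) ^ s.card := one_le_pow₀ (by linarith)
  calc ∑ Y ∈ s.powerset, z ^ Y.card * (2 * 2 ^ Y.card - 1)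
      = 2 * ∑ Y ∈ s.powerset, (2 * z) ^ Y.card - ∑ Y ∈ s.powerset, z ^ Y.card := by
        rw [mul_sum, ← sum_sub_distrib]
        exact sum_congr rfl fun Y _ => by ring
    _ ≤ 2 := by rw [h₁, h₂, add_comm (2 * z)]; linarith

lemma mul_leafCount_cons (φ : Restriction n → ℝ) (t : Term n) (ts : List (Term n))
    (ρ : Restriction n) :
    φ ρ * leafCount (t :: ts) ρ = (if t.Falsified ρ then φ ρ else 0) * leafCount ts ρ +
      ∑ Y ∈ t.vars.powerset, if t.Alive Y ρ then
        φ ρ * (1 + ∑ y ∈ Y.powerset.erase (Y ∩ t.pos), (leafCount ts (ρ.assign Y y) : ℝ))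
        else 0 := by
  by_cases hf : t.Falsified ρ
  · have hdead : ∀ Y ∈ t.vars.powerset, ¬ t.Alive Y ρ := fun Y hY h =>
      ((Term.not_falsified_and_stars_eq_iff (mem_powerset.1 hY)).2 h).1 hf
    rw [sum_eq_zero fun Y hY => if_neg (hdead Y hY)]
    simp [leafCount, hf]
  · have hstars : t.stars ρ ⊆ t.vars := filter_subset _ _
    rw [sum_eq_single_of_mem (t.stars ρ) (mem_powerset.2 hstars),
      if_pos ((Term.not_falsified_and_stars_eq_iff hstars).1 ⟨hf, rfl⟩)]
    · simp only [leafCount, hf, if_false, zero_mul, zero_add]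
      push_cast
      rfl
    · intro Y hY hne
      exact if_neg fun h =>
        hne ((Term.not_falsified_and_stars_eq_iff (mem_powerset.1 hY)).2 h).2.symm

theorem leafCountBound (hp0 : 0 ≤ p) (hp1 : p < 1) {k : ℕ}
    (hk : (1 + 2 * (2 * p / (1 - p))) ^ k ≤ 3 / 2) (L : List (Term n))
    (hL : ∀ t ∈ L, t.vars.card ≤ k) : LeafCountBound p L := by
  induction L with
  | nil =>
    intro φ hφ0 _
    simp only [leafCount, Nat.cast_one, mul_one]
    linarith [expectation_nonneg hp0 hp1.le hφ0]
  | cons t ts ih =>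
    intro φ hφ0 hφ
    have hts := ih fun u hu => hL u (List.mem_cons_of_mem t hu)
    set z := 2 * p / (1 - p)
    have hz : 0 ≤ z := div_nonneg (by linarith) (by linarith)
    set M := expectation p (fun σ => if FixesOn t.vars t.pos σ then φ σ else 0)
    have hM : 0 ≤ M := expectation_nonneg hp0 hp1.le fun σ => by split_ifs <;> simp [hφ0]
    have hfals := hts (fun ρ => if t.Falsified ρ then φ ρ else 0)
      (fun ρ => by split_ifs <;> simp [hφ0])
      (RefinementMonotone.ite (fun _ _ h hρ => hρ.of_refines h) hφ hφ0)
    have halive : ∑ Y ∈ t.vars.powerset, expectation p (fun ρ => if t.Alive Y ρ then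
        φ ρ * (1 + ∑ y ∈ Y.powerset.erase (Y ∩ t.pos), (leafCount ts (ρ.assign Y y) : ℝ))
        else 0) ≤ 2 * M :=
      calc _ ≤ ∑ Y ∈ t.vars.powerset, z ^ Y.card * (2 * 2 ^ Y.card - 1) * M :=
            sum_le_sum fun Y _ => expectation_alive_mul_branches_le hp0 hp1 hts t Y hφ hφ0
        _ ≤ 2 * M := by
            rw [← sum_mul]
            refine mul_le_mul_of_nonneg_right (sum_powerset_pow_mul_le_two _ hz ?_) hM
            exact (pow_le_pow_right₀ (by linarith) (hL t List.mem_cons_self)).trans hk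
    have hdisjoint :
        expectation p (fun ρ => if t.Falsified ρ then φ ρ else 0) + M ≤ expectation p φ := by
      rw [← expectation_add]
      refine expectation_mono hp0 hp1.le fun ρ => ?_
      by_cases hf : t.Falsified ρ
      · simp [hf, mt Term.not_falsified_of_fixesOn (not_not.2 hf)]
      · simp only [hf, if_false, zero_add]
        split_ifs <;> simp [hφ0]
    simp only [mul_leafCount_cons, expectation_add, expectation_sum]
    linarith

lemma one_add_pow_le_three_halves {k : ℕ} (hp0 : 0 ≤ p) (hp : p ≤ 1 / (28 * (k : ℝ))) :
    p < 1 ∧ (1 + 2 * (2 * p / (1 - p))) ^ k ≤ 3 / 2 := by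
  obtain ⟨hp28, hkp⟩ : p ≤ 1 / 28 ∧ k * p ≤ 1 / 28 := by
    rcases Nat.eq_zero_or_pos k with rfl | hk
    · simp only [Nat.cast_zero, mul_zero, div_zero] at hp
      constructor <;> linarith
    · have hk' : (1 : ℝ) ≤ k := by exact_mod_cast hk
      rw [le_div_iff₀ (by positivity)] at hp
      constructor <;> nlinarith
  refine ⟨by linarith, ?_⟩
  set x := 2 * (2 * p / (1 - p))
  have hx : 0 ≤ x := mul_nonneg zero_le_two (div_nonneg (by linarith) (by linarith))
  have hkx : k * x ≤ 4 / 27 := by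
    have : k * x = 4 * (k * p) / (1 - p) := by simp only [x]; ring
    rw [this, div_le_iff₀ (by linarith)]
    nlinarith
  calc (1 + x) ^ k ≤ Real.exp x ^ k :=
        pow_le_pow_left₀ (by linarith) (by linarith [Real.add_one_le_exp x]) k
    _ = Real.exp (k * x) := (Real.exp_nat_mul x k).symm
    _ ≤ Real.exp (4 / 27) := Real.exp_le_exp.2 hkx
    _ ≤ 3 / 2 := by
        have := Real.exp_bound_div_one_sub_of_interval' (x := 4 / 27) (by norm_num) (by norm_num)
        norm_num at this ⊢
        linarith

end Expectation

namespace Term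

variable {n : ℕ}

/-- The clause `⋀_{i ∈ A} xᵢ ∧ ⋀_{j ∈ B} x̄ⱼ` with weight `a`; an unsatisfiable clause
(`A ∩ B ≠ ∅`) gets weight `0`, which does not change its value. -/
def ofClause (A B : Finset (Fin n)) (a : ℕ) : Term n :=
  ⟨A ∪ B, A, if Disjoint A B then a else 0⟩

lemma eval_ofClause (A B : Finset (Fin n)) (a : ℕ) (x : Fin n → Bool) :
    (ofClause A B a).eval x = if (∀ i ∈ A, x i = true) ∧ (∀ j ∈ B, x j = false) then a else 0 := by
  by_cases hd : Disjoint A B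
  · have hsat : (ofClause A B a).Sat x ↔ (∀ i ∈ A, x i = true) ∧ (∀ j ∈ B, x j = false) := by
      simp only [Sat, ofClause, mem_union]
      constructor
      · intro h
        exact ⟨fun i hi => by simpa [hi] using h i (Or.inl hi),
          fun j hj => by simpa [disjoint_right.1 hd hj] using h j (Or.inr hj)⟩
      · rintro ⟨hA, hB⟩ i (hi | hi)
        · simp [hi, hA i hi]
        · simp [disjoint_right.1 hd hi, hB i hi]
    by_cases hc : (∀ i ∈ A, x i = true) ∧ (∀ j ∈ B, x j = false)
    · rw [eval, if_pos (hsat.2 hc), if_pos hc]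
      simp [ofClause, hd]
    · simp [eval, mt hsat.1 hc, hc]
  · have hc : ¬ ((∀ i ∈ A, x i = true) ∧ (∀ j ∈ B, x j = false)) := by
      rintro ⟨hA, hB⟩
      obtain ⟨i, hiA, hiB⟩ := not_disjoint_iff.1 hd
      simpa [hA i hiA] using hB i hiB
    simp [eval, ofClause, hd, hc]

end Term

lemma IsPBDNF.exists_sorted_terms {n k r : ℕ} {f : (Fin n → Bool) → ℝ} (hf : IsPBDNF k r f) :
    ∃ L : List (Term n), L.Pairwise (fun u v => v.weight ≤ u.weight) ∧
      (∀ t ∈ L, t.weight ≤ r ∧ t.vars.card ≤ k) ∧ f = dnfFun r L := by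
  obtain ⟨m, a, A, B, ha, hAB, hf⟩ := hf
  set L₀ := List.ofFn fun t => Term.ofClause (A t) (B t) (a t)
  refine ⟨L₀.mergeSort fun u v => decide (v.weight ≤ u.weight), ?_, ?_, ?_⟩
  · refine (List.pairwise_mergeSort (fun _ _ _ h₁ h₂ => ?_) (fun u v => ?_) L₀).imp ?_
    · simp only [decide_eq_true_eq] at *; omega
    · simp only [Bool.or_eq_true, decide_eq_true_eq]; omega
    · simp
  · intro t ht
    obtain ⟨i, rfl⟩ := List.mem_ofFn.1 ((List.mergeSort_perm _ _).subset ht)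
    refine ⟨?_, (card_union_le _ _).trans (hAB i)⟩
    simp only [Term.ofClause]
    split_ifs
    exacts [ha i, Nat.zero_le r]
  · funext x
    rw [hf x, dnfFun, dnfValue, Multiset.coe_eq_coe.2 (List.mergeSort_perm _ _), ← Fin.univ_val_map,
      Multiset.map_map, ← Finset.sup_def]
    simp [Function.comp_def, Term.eval_ofClause]

/-- for `f ∈ DNF^{k,r}` and a random restriction `ρ` with
parameter `p ≤ 1/(28k)` (each variable independently `★` w.p. `p`, and `0`/`1`
each w.p. `(1−p)/2`), the expected Fourier `L₁`-norm of `f|ρ` is at most `2r`. -/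
theorem pbdnf_expected_l1_bound (n k r : ℕ) (hr : 1 ≤ r)
    (p : ℝ) (hp0 : 0 < p) (hp : p ≤ 1 / (28 * (k : ℝ)))
    (f : (Fin n → Bool) → ℝ) (hf : IsPBDNF k r f) :
    ∑ ρ : Fin n → Option Bool,
        (∏ i, if ρ i = none then p else (1 - p) / 2) *
          ∑ S : Finset (Fin n), |pbFourier (restrictFun f ρ) S|
      ≤ 2 * (r : ℝ) := by
  obtain ⟨L, hsorted, hterms, rfl⟩ := hf.exists_sorted_terms
  obtain ⟨hp1, hk⟩ := one_add_pow_le_three_halves hp0.le hp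
  have hr' : (1 : ℝ) ≤ r := by exact_mod_cast hr
  calc _ = Restriction.expectation p fun ρ => fourierL1 (restrictFun (dnfFun r L) ρ) := rfl
    _ ≤ Restriction.expectation p fun ρ => 1 * (leafCount L ρ : ℝ) :=
        Restriction.expectation_mono hp0.le hp1.le fun ρ => by
          rw [one_mul]
          exact fourierL1_restrictFun_dnfFun_le_leafCount hr L hsorted (fun t ht => (hterms t ht).1) ρ
    _ ≤ 2 * Restriction.expectation p fun _ => 1 :=
        leafCountBound hp0.le hp1 hk L (fun t ht => (hterms t ht).2) _ (fun _ => zero_le_one)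
          fun _ _ _ => le_rfl
    _ ≤ 2 * r := by rw [Restriction.expectation_one]; linarith
end
end

section
/- Let f: {−1,1}^n → [−1,1], let t be a nonnegative integer, let 0 < p ≤ 1, and let ρ be a random restriction with parameter p. Then L_{1,t}(f) ≤ (1/p)^t · E_ρ[L_{1,t}(f|ρ)], where L_{1,t}(g) = ∑_{|S|=t} |ĝ(S)|. -/
/-! Averaging the Fourier coefficients of `f|ρ` over `ρ` gives `E_ρ[(f|ρ)^(S)] = p^|S| f̂(S)`.
Indeed, pair `ρ` with a uniform assignment `x` of the live variables: the combined input
`y = ρ.getD x` is uniform, and given `y` each coordinate `i ∈ S` is live (so `x i = y i`) with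
probability `p`, and otherwise `x i` is a uniform sign independent of everything else, so
`χ_S(x)` has conditional expectation `p^|S| χ_S(y)`. The triangle inequality then yields
`p^t |f̂(S)| ≤ E_ρ |(f|ρ)^(S)|` for `|S| = t`, and one sums over `S`. -/

open Finset

section PushForward

variable {ι α β γ R : Type*} [Fintype ι] [DecidableEq ι] [Fintype α] [Fintype β]
  [Fintype γ] [DecidableEq γ] [CommSemiring R]

/-- Pushing a product weight on `(ι → α) × (ι → β)` forward along the coordinatewise map `φ`
gives a product weight on `ι → γ`. -/
theorem sum_sum_map_mul_prod (φ : α → β → γ) (g : ι → α → β → R) (F : (ι → γ) → R) :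
    ∑ a : ι → α, ∑ b : ι → β, F (fun i => φ (a i) (b i)) * ∏ i, g i (a i) (b i)
      = ∑ y : ι → γ, F y * ∏ i, ∑ a, ∑ b, if φ a b = y i then g i a b else 0 := by
  have hfactor : ∀ y : ι → γ, (∏ i, ∑ a, ∑ b, if φ a b = y i then g i a b else 0)
      = ∑ a : ι → α, ∑ b : ι → β,
          if (fun i => φ (a i) (b i)) = y then ∏ i, g i (a i) (b i) else 0 := by
    intro y
    simp only [Fintype.prod_sum, funext_iff, ← Fintype.prod_ite_zero]
  simp only [hfactor, mul_sum, mul_ite, mul_zero]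
  symm
  rw [sum_comm]
  refine sum_congr rfl fun a _ => ?_
  rw [sum_comm]
  exact sum_congr rfl fun b _ => Fintype.sum_ite_eq _ _

end PushForward

noncomputable def restrictionCoordProb (p : ℝ) (a : Option Bool) : ℝ :=
  if a = none then p else (1 - p) / 2

noncomputable def restrictionProb {ι : Type*} [Fintype ι] (p : ℝ) (ρ : ι → Option Bool) : ℝ :=
  ∏ i, restrictionCoordProb p (ρ i)

theorem restrictionProb_nonneg {ι : Type*} [Fintype ι] {p : ℝ} (hp0 : 0 ≤ p) (hp1 : p ≤ 1)
    (ρ : ι → Option Bool) : 0 ≤ restrictionProb p ρ :=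
  prod_nonneg fun i _ => by unfold restrictionCoordProb; split_ifs <;> linarith

theorem sum_restrictionCoordProb_of_getD_eq (p : ℝ) (y : Bool) :
    ∑ a : Option Bool, ∑ b : Bool,
      (if a.getD b = y then restrictionCoordProb p a else 0) = 1 := by
  cases y <;> simp [restrictionCoordProb, Fintype.sum_option]

theorem sum_restrictionCoordProb_mul_sign_of_getD_eq (p : ℝ) (y : Bool) :
    ∑ a : Option Bool, ∑ b : Bool,
      (if a.getD b = y then restrictionCoordProb p a * (if b then 1 else -1) else 0)
      = p * if y then 1 else -1 := by
  cases y <;> simp [restrictionCoordProb, Fintype.sum_option]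

theorem sum_restrictionProb_mul_pbFourier_restrictFun {n : ℕ} (p : ℝ)
    (f : (Fin n → Bool) → ℝ) (S : Finset (Fin n)) :
    ∑ ρ, restrictionProb p ρ * pbFourier (restrictFun f ρ) S = p ^ S.card * pbFourier f S := by
  set g : Fin n → Option Bool → Bool → ℝ := fun i a b =>
    restrictionCoordProb p a * if i ∈ S then (if b then 1 else -1) else 1
  have hjoint : ∀ ρ, restrictionProb p ρ *
        ∑ x : Fin n → Bool, restrictFun f ρ x * ∏ i ∈ S, (if x i then (1 : ℝ) else -1)
      = ∑ x : Fin n → Bool, f (fun i => (ρ i).getD (x i)) * ∏ i, g i (ρ i) (x i) := by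
    intro ρ
    simp only [mul_sum, g, prod_mul_distrib, prod_ite_mem, univ_inter, restrictFun,
      restrictionProb]
    exact sum_congr rfl fun x _ => by ring
  have hcoord : ∀ (y : Fin n → Bool) i,
      ∑ a, ∑ b, (if a.getD b = y i then g i a b else 0)
        = if i ∈ S then p * (if y i then 1 else -1) else 1 := by
    intro y i
    by_cases hi : i ∈ S
    · simpa only [g, hi, if_true] using sum_restrictionCoordProb_mul_sign_of_getD_eq p (y i)
    · simpa only [g, hi, if_false, mul_one] using sum_restrictionCoordProb_of_getD_eq p (y i)
  simp only [pbFourier, ← mul_div_assoc, ← sum_div, hjoint]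
  rw [sum_sum_map_mul_prod Option.getD g f, mul_sum]
  congr 1
  refine sum_congr rfl fun y _ => ?_
  rw [Fintype.prod_congr _ _ (hcoord y), prod_ite_mem, univ_inter, prod_mul_distrib,
    prod_const]
  ring

theorem pow_card_mul_abs_pbFourier_le {n : ℕ} {p : ℝ} (hp0 : 0 ≤ p) (hp1 : p ≤ 1)
    (f : (Fin n → Bool) → ℝ) (S : Finset (Fin n)) :
    p ^ S.card * |pbFourier f S| ≤ ∑ ρ, restrictionProb p ρ * |pbFourier (restrictFun f ρ) S| :=
  calc p ^ S.card * |pbFourier f S|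
      = |∑ ρ, restrictionProb p ρ * pbFourier (restrictFun f ρ) S| := by
        rw [sum_restrictionProb_mul_pbFourier_restrictFun, abs_mul,
          abs_of_nonneg (pow_nonneg hp0 _)]
    _ ≤ ∑ ρ, |restrictionProb p ρ * pbFourier (restrictFun f ρ) S| := abs_sum_le_sum_abs _ _
    _ = ∑ ρ, restrictionProb p ρ * |pbFourier (restrictFun f ρ) S| := by
        simp only [abs_mul, abs_of_nonneg (restrictionProb_nonneg hp0 hp1 _)]

theorem l1t_random_restriction_bound_general (n t : ℕ) (p : ℝ) (hp0 : 0 < p) (hp1 : p ≤ 1)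
    (f : (Fin n → Bool) → ℝ) :
    ∑ S ∈ Finset.univ.filter (fun S : Finset (Fin n) => S.card = t),
        |pbFourier f S|
      ≤ (1 / p) ^ t *
        ∑ ρ : Fin n → Option Bool,
          (∏ i, if ρ i = none then p else (1 - p) / 2) *
            ∑ S ∈ Finset.univ.filter (fun S : Finset (Fin n) => S.card = t),
              |pbFourier (restrictFun f ρ) S| := by
  change _ ≤ _ * ∑ ρ, restrictionProb p ρ * _
  calc ∑ S ∈ univ.filter (fun S : Finset (Fin n) => S.card = t), |pbFourier f S|
      ≤ ∑ S ∈ univ.filter (fun S : Finset (Fin n) => S.card = t),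
          (1 / p) ^ t * ∑ ρ, restrictionProb p ρ * |pbFourier (restrictFun f ρ) S| := by
        refine sum_le_sum fun S hS => ?_
        rw [one_div, inv_pow, inv_mul_eq_div, le_div_iff₀' (pow_pos hp0 t),
          ← (mem_filter.mp hS).2]
        exact pow_card_mul_abs_pbFourier_le hp0.le hp1 f S
    _ = (1 / p) ^ t * ∑ ρ, restrictionProb p ρ *
          ∑ S ∈ univ.filter (fun S : Finset (Fin n) => S.card = t),
            |pbFourier (restrictFun f ρ) S| := by
        rw [← mul_sum, sum_comm]
        simp only [mul_sum]

/-- for `f : {−1,1}^n → [−1,1]`, a nonnegative integer `t`, and a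
random restriction `ρ` with parameter `0 < p ≤ 1`,
`L_{1,t}(f) ≤ (1/p)^t · E_ρ[L_{1,t}(f|ρ)]`, where `L_{1,t}(g) = ∑_{|S|=t} |ĝ(S)|`. -/
theorem l1t_random_restriction_bound (n t : ℕ) (p : ℝ) (hp0 : 0 < p) (hp1 : p ≤ 1)
    (f : (Fin n → Bool) → ℝ) (hf : ∀ x, f x ∈ Set.Icc (-1 : ℝ) 1) :
    ∑ S ∈ Finset.univ.filter (fun S : Finset (Fin n) => S.card = t),
        |pbFourier f S|
      ≤ (1 / p) ^ t *
        ∑ ρ : Fin n → Option Bool,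
          (∏ i, if ρ i = none then p else (1 - p) / 2) *
            ∑ S ∈ Finset.univ.filter (fun S : Finset (Fin n) => S.card = t),
              |pbFourier (restrictFun f ρ) S| :=
  l1t_random_restriction_bound_general n t p hp0 hp1 f
end
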